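/- arXiv:2108.06940 — 5 statements merged into one kernel-verified Lean document; each statement's English description precedes it below -/
import Mathlib

section
/- For every G1, G2 ∈ 𝒢 and every ε ∈ (0,1), ε·J(G1) + (1−ε)·J(G2) ≤ J(ε·G1 + (1−ε)·G2); that is, the objective J of the quantile-formulated insurance problem is concave on the convex set 𝒢. -/
open MeasureTheory Set

/-- The mean-variance operator `ol` from the paper. -/
noncomputable def ol (σ θ k : ℝ) (q f : ℝ → ℝ) : ℝ :=
  σ * (∫ t in (0:ℝ)..1, f t) ^ 2 - σ * (∫ t in (0:ℝ)..1, (f t) ^ 2)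
    + 2 * σ * (∫ t in (0:ℝ)..1, q t * f t)
    + (θ - 2 * σ * (∫ t in (0:ℝ)..1, q t)) * (∫ t in (0:ℝ)..1, f t) + k

/-- Membership in the admissible class `𝒢`: `G(p) = ∫₀ᵖ g(t)dt` on `[0,1]`
for some measurable `g` with `0 ≤ g ≤ h` a.e. on `[0,1]`. -/
def InG (h G : ℝ → ℝ) : Prop :=
  ∃ g : ℝ → ℝ, Measurable g ∧
    (∀ᵐ t ∂(volume.restrict (Icc (0:ℝ) 1)), 0 ≤ g t ∧ g t ≤ h t) ∧
    ∀ p ∈ Icc (0:ℝ) 1, G p = ∫ t in (0:ℝ)..p, g t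

/-- The objective `J(G) = ∫_{[0,1]} u(ol(G) − G(1−p)) μ(dp)`. -/
noncomputable def J (σ θ k : ℝ) (q u : ℝ → ℝ) (μ : Measure ℝ) (G : ℝ → ℝ) : ℝ :=
  ∫ p in Icc (0:ℝ) 1, u (ol σ θ k q G - G (1 - p)) ∂μ

/-- Cauchy–Schwarz on `[0,1]`: `(∫₀¹ D)² ≤ ∫₀¹ D²`. -/
lemma sq_int_le_int_sq (D : ℝ → ℝ) (hD : ContinuousOn D (Icc (0:ℝ) 1)) :
    (∫ t in (0:ℝ)..1, D t) ^ 2 ≤ ∫ t in (0:ℝ)..1, (D t) ^ 2 := by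
  have huIcc : uIcc (0:ℝ) 1 = Icc (0:ℝ) 1 := uIcc_of_le zero_le_one
  have hDu : ContinuousOn D (uIcc (0:ℝ) 1) := huIcc ▸ hD
  have hDi : IntervalIntegrable D volume 0 1 := hDu.intervalIntegrable
  have hD2i : IntervalIntegrable (fun t => (D t) ^ 2) volume 0 1 :=
    (hDu.pow 2).intervalIntegrable
  set m := ∫ t in (0:ℝ)..1, D t with hm
  have key : (0:ℝ) ≤ ∫ t in (0:ℝ)..1, (D t - m) ^ 2 :=
    intervalIntegral.integral_nonneg zero_le_one fun t _ => sq_nonneg _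
  have expand : ∫ t in (0:ℝ)..1, (D t - m) ^ 2
      = (∫ t in (0:ℝ)..1, (D t) ^ 2) - m ^ 2 := by
    have h1 : ∫ t in (0:ℝ)..1, (D t - m) ^ 2
        = ∫ t in (0:ℝ)..1, ((D t) ^ 2 - ((2 * m) * D t - m ^ 2)) :=
      intervalIntegral.integral_congr fun t _ => by ring
    rw [h1, intervalIntegral.integral_sub hD2i
        ((hDi.const_mul _).sub intervalIntegrable_const),
      intervalIntegral.integral_sub (hDi.const_mul _) intervalIntegrable_const,
      intervalIntegral.integral_const_mul, intervalIntegral.integral_const]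
    simp only [smul_eq_mul, ← hm]
    ring
  linarith

/-- `ol` only depends on the values of `f` on `[0,1]`. -/
lemma ol_congr_f (σ θ k : ℝ) (Q : ℝ → ℝ) {f f' : ℝ → ℝ}
    (hf : EqOn f f' (uIcc (0:ℝ) 1)) : ol σ θ k Q f = ol σ θ k Q f' := by
  have A : (∫ t in (0:ℝ)..1, f t) = ∫ t in (0:ℝ)..1, f' t :=
    intervalIntegral.integral_congr hf
  have B : (∫ t in (0:ℝ)..1, (f t) ^ 2) = ∫ t in (0:ℝ)..1, (f' t) ^ 2 :=
    intervalIntegral.integral_congr fun t ht => by simp only [hf ht]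
  have C : (∫ t in (0:ℝ)..1, Q t * f t) = ∫ t in (0:ℝ)..1, Q t * f' t :=
    intervalIntegral.integral_congr fun t ht => by simp only [hf ht]
  unfold ol
  rw [A, B, C]

/-- `ol` only depends on the values of `q` on `[0,1]`. -/
lemma ol_congr_q (σ θ k : ℝ) {Q Q' : ℝ → ℝ} (f : ℝ → ℝ)
    (hQ : EqOn Q Q' (uIcc (0:ℝ) 1)) : ol σ θ k Q f = ol σ θ k Q' f := by
  have A : (∫ t in (0:ℝ)..1, Q t) = ∫ t in (0:ℝ)..1, Q' t :=
    intervalIntegral.integral_congr hQ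
  have B : (∫ t in (0:ℝ)..1, Q t * f t) = ∫ t in (0:ℝ)..1, Q' t * f t :=
    intervalIntegral.integral_congr fun t ht => by simp only [hQ ht]
  unfold ol
  rw [A, B]

/-- Concavity of `ol` along segments, for continuous arguments. -/
lemma ol_key (σ θ k : ℝ) (hσ : 0 ≤ σ) (Q f1 f2 : ℝ → ℝ)
    (hQ : ContinuousOn Q (Icc (0:ℝ) 1)) (h1 : ContinuousOn f1 (Icc (0:ℝ) 1))
    (h2 : ContinuousOn f2 (Icc (0:ℝ) 1)) (ε : ℝ) (hε0 : 0 ≤ ε) (hε1 : ε ≤ 1) :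
    ε * ol σ θ k Q f1 + (1 - ε) * ol σ θ k Q f2
      ≤ ol σ θ k Q (fun t => ε * f1 t + (1 - ε) * f2 t) := by
  have huIcc : uIcc (0:ℝ) 1 = Icc (0:ℝ) 1 := uIcc_of_le zero_le_one
  have h1u : ContinuousOn f1 (uIcc (0:ℝ) 1) := huIcc ▸ h1
  have h2u : ContinuousOn f2 (uIcc (0:ℝ) 1) := huIcc ▸ h2
  have hQu : ContinuousOn Q (uIcc (0:ℝ) 1) := huIcc ▸ hQ
  have i1 : IntervalIntegrable f1 volume 0 1 := h1u.intervalIntegrable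
  have i2 : IntervalIntegrable f2 volume 0 1 := h2u.intervalIntegrable
  have i1sq : IntervalIntegrable (fun t => (f1 t) ^ 2) volume 0 1 :=
    (h1u.pow 2).intervalIntegrable
  have i2sq : IntervalIntegrable (fun t => (f2 t) ^ 2) volume 0 1 :=
    (h2u.pow 2).intervalIntegrable
  have iD : IntervalIntegrable (fun t => (f1 t - f2 t) ^ 2) volume 0 1 :=
    ((h1u.sub h2u).pow 2).intervalIntegrable
  have iq1 : IntervalIntegrable (fun t => Q t * f1 t) volume 0 1 :=
    (hQu.mul h1u).intervalIntegrable
  have iq2 : IntervalIntegrable (fun t => Q t * f2 t) volume 0 1 :=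
    (hQu.mul h2u).intervalIntegrable
  unfold ol
  simp only
  set I1 := ∫ t in (0:ℝ)..1, f1 t with hI1
  set I2 := ∫ t in (0:ℝ)..1, f2 t with hI2
  set S1 := ∫ t in (0:ℝ)..1, (f1 t) ^ 2 with hS1
  set S2 := ∫ t in (0:ℝ)..1, (f2 t) ^ 2 with hS2
  set V := ∫ t in (0:ℝ)..1, (f1 t - f2 t) ^ 2 with hV
  set P1 := ∫ t in (0:ℝ)..1, Q t * f1 t with hP1
  set P2 := ∫ t in (0:ℝ)..1, Q t * f2 t with hP2
  have hE : ∫ t in (0:ℝ)..1, (ε * f1 t + (1 - ε) * f2 t)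
      = ε * I1 + (1 - ε) * I2 := by
    rw [hI1, hI2, intervalIntegral.integral_add (i1.const_mul ε) (i2.const_mul (1 - ε)),
      intervalIntegral.integral_const_mul, intervalIntegral.integral_const_mul]
  have hT : ∫ t in (0:ℝ)..1, (ε * f1 t + (1 - ε) * f2 t) ^ 2
      = ε * S1 + (1 - ε) * S2 - ε * (1 - ε) * V := by
    have hpt : ∫ t in (0:ℝ)..1, (ε * f1 t + (1 - ε) * f2 t) ^ 2
        = ∫ t in (0:ℝ)..1, (ε * (f1 t) ^ 2
            + ((1 - ε) * (f2 t) ^ 2 + (-(ε * (1 - ε))) * (f1 t - f2 t) ^ 2)) :=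
      intervalIntegral.integral_congr fun t _ => by ring
    rw [hpt, intervalIntegral.integral_add (i1sq.const_mul ε)
        ((i2sq.const_mul _).add (iD.const_mul _)),
      intervalIntegral.integral_add (i2sq.const_mul _) (iD.const_mul _),
      intervalIntegral.integral_const_mul, intervalIntegral.integral_const_mul,
      intervalIntegral.integral_const_mul, hS1, hS2, hV]
    ring
  have hPQ : ∫ t in (0:ℝ)..1, Q t * (ε * f1 t + (1 - ε) * f2 t)
      = ε * P1 + (1 - ε) * P2 := by
    have hpt : ∫ t in (0:ℝ)..1, Q t * (ε * f1 t + (1 - ε) * f2 t)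
        = ∫ t in (0:ℝ)..1, (ε * (Q t * f1 t) + (1 - ε) * (Q t * f2 t)) :=
      intervalIntegral.integral_congr fun t _ => by ring
    rw [hpt, intervalIntegral.integral_add (iq1.const_mul ε) (iq2.const_mul (1 - ε)),
      intervalIntegral.integral_const_mul, intervalIntegral.integral_const_mul, hP1, hP2]
  have hM : ∫ t in (0:ℝ)..1, (f1 t - f2 t) = I1 - I2 := by
    rw [hI1, hI2, intervalIntegral.integral_sub i1 i2]
  have hCS : (I1 - I2) ^ 2 ≤ V := by
    rw [← hM, hV]; exact sq_int_le_int_sq _ (h1.sub h2)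
  have hpos : 0 ≤ σ * ε * (1 - ε) * (V - (I1 - I2) ^ 2) :=
    mul_nonneg (mul_nonneg (mul_nonneg hσ hε0) (by linarith)) (by linarith)
  rw [hE, hT, hPQ]
  nlinarith [hpos]

theorem stmt_3 (σ θ k : ℝ) (hσ : 0 < σ) (hθ : 0 ≤ θ)
    (q h : ℝ → ℝ)
    (hh_int : IntegrableOn h (Icc (0:ℝ) 1))
    (hh_nonneg : ∀ᵐ t ∂(volume.restrict (Icc (0:ℝ) 1)), 0 ≤ h t)
    (hq : ∀ p ∈ Icc (0:ℝ) 1, q p = ∫ t in (0:ℝ)..p, h t)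
    (m₀ : ℝ) (hm₀ : m₀ ∈ Ico (0:ℝ) 1)
    (hq0 : ∀ p ∈ Icc (0:ℝ) m₀, q p = 0)
    (hhpos : ∀ᵐ t ∂(volume.restrict (Ioo m₀ 1)), 0 < h t)
    (u : ℝ → ℝ) (hu_conc : ConcaveOn ℝ univ u) (hu_mono : StrictMono u)
    (hu_diff : Differentiable ℝ u)
    (μ : Measure ℝ) [IsProbabilityMeasure μ] (hμ0 : μ {0} = 0)
    (hμsupp : μ (Icc (0:ℝ) 1)ᶜ = 0)
    (G1 G2 : ℝ → ℝ) (hG1 : InG h G1) (hG2 : InG h G2)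
    (ε : ℝ) (hε : ε ∈ Ioo (0:ℝ) 1) :
    ε * J σ θ k q u μ G1 + (1 - ε) * J σ θ k q u μ G2
      ≤ J σ θ k q u μ (fun p => ε * G1 p + (1 - ε) * G2 p) := by
  obtain ⟨g1, hg1m, hg1b, hG1e⟩ := hG1
  obtain ⟨g2, hg2m, hg2b, hG2e⟩ := hG2
  obtain ⟨hε0, hε1⟩ := hε
  have huIcc : uIcc (0:ℝ) 1 = Icc (0:ℝ) 1 := uIcc_of_le zero_le_one
  set C1 : ℝ → ℝ := fun p => ∫ t in (0:ℝ)..p, g1 t with hC1def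
  set C2 : ℝ → ℝ := fun p => ∫ t in (0:ℝ)..p, g2 t with hC2def
  set Qc : ℝ → ℝ := fun p => ∫ t in (0:ℝ)..p, h t with hQcdef
  have hg1int : IntegrableOn g1 (Icc (0:ℝ) 1) := by
    refine hh_int.mono' hg1m.aestronglyMeasurable ?_
    filter_upwards [hg1b] with t ht
    rw [Real.norm_eq_abs, abs_of_nonneg ht.1]; exact ht.2
  have hg2int : IntegrableOn g2 (Icc (0:ℝ) 1) := by
    refine hh_int.mono' hg2m.aestronglyMeasurable ?_
    filter_upwards [hg2b] with t ht
    rw [Real.norm_eq_abs, abs_of_nonneg ht.1]; exact ht.2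
  have hC1c : ContinuousOn C1 (Icc (0:ℝ) 1) := by
    rw [← huIcc]
    exact intervalIntegral.continuousOn_primitive_interval (by rwa [huIcc])
  have hC2c : ContinuousOn C2 (Icc (0:ℝ) 1) := by
    rw [← huIcc]
    exact intervalIntegral.continuousOn_primitive_interval (by rwa [huIcc])
  have hQcc : ContinuousOn Qc (Icc (0:ℝ) 1) := by
    rw [← huIcc]
    exact intervalIntegral.continuousOn_primitive_interval (by rwa [huIcc])
  have e1 : EqOn G1 C1 (uIcc (0:ℝ) 1) := by
    rw [huIcc]; exact fun p hp => hG1e p hp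
  have e2 : EqOn G2 C2 (uIcc (0:ℝ) 1) := by
    rw [huIcc]; exact fun p hp => hG2e p hp
  have eqq : EqOn q Qc (uIcc (0:ℝ) 1) := by
    rw [huIcc]; exact fun p hp => hq p hp
  have eε : EqOn (fun p => ε * G1 p + (1 - ε) * G2 p)
      (fun p => ε * C1 p + (1 - ε) * C2 p) (uIcc (0:ℝ) 1) := fun p hp => by
    simp only [e1 hp, e2 hp]
  have o1 : ol σ θ k q G1 = ol σ θ k Qc C1 :=
    (ol_congr_q σ θ k G1 eqq).trans (ol_congr_f σ θ k Qc e1)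
  have o2 : ol σ θ k q G2 = ol σ θ k Qc C2 :=
    (ol_congr_q σ θ k G2 eqq).trans (ol_congr_f σ θ k Qc e2)
  have oε : ol σ θ k q (fun p => ε * G1 p + (1 - ε) * G2 p)
      = ol σ θ k Qc (fun p => ε * C1 p + (1 - ε) * C2 p) :=
    (ol_congr_q σ θ k _ eqq).trans (ol_congr_f σ θ k Qc eε)
  have okey : ε * ol σ θ k Qc C1 + (1 - ε) * ol σ θ k Qc C2
      ≤ ol σ θ k Qc (fun p => ε * C1 p + (1 - ε) * C2 p) :=
    ol_key σ θ k hσ.le Qc C1 C2 hQcc hC1c hC2c ε hε0.le hε1.le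
  have hmaps : ∀ p ∈ Icc (0:ℝ) 1, (1:ℝ) - p ∈ Icc (0:ℝ) 1 := fun p hp =>
    ⟨by linarith [hp.2], by linarith [hp.1]⟩
  have hJ1 : J σ θ k q u μ G1
      = ∫ p in Icc (0:ℝ) 1, u (ol σ θ k Qc C1 - C1 (1 - p)) ∂μ := by
    unfold J
    refine setIntegral_congr_fun measurableSet_Icc fun p hp => ?_
    rw [o1, e1 (huIcc ▸ hmaps p hp)]
  have hJ2 : J σ θ k q u μ G2
      = ∫ p in Icc (0:ℝ) 1, u (ol σ θ k Qc C2 - C2 (1 - p)) ∂μ := by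
    unfold J
    refine setIntegral_congr_fun measurableSet_Icc fun p hp => ?_
    rw [o2, e2 (huIcc ▸ hmaps p hp)]
  have hJε : J σ θ k q u μ (fun p => ε * G1 p + (1 - ε) * G2 p)
      = ∫ p in Icc (0:ℝ) 1,
          u (ol σ θ k Qc (fun p => ε * C1 p + (1 - ε) * C2 p)
            - (ε * C1 (1 - p) + (1 - ε) * C2 (1 - p))) ∂μ := by
    unfold J
    refine setIntegral_congr_fun measurableSet_Icc fun p hp => ?_
    rw [oε]
    simp only [e1 (huIcc ▸ hmaps p hp), e2 (huIcc ▸ hmaps p hp)]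
  have hsub : ContinuousOn (fun p : ℝ => 1 - p) (Icc (0:ℝ) 1) :=
    (continuous_const.sub continuous_id).continuousOn
  have hmapsTo : MapsTo (fun p : ℝ => 1 - p) (Icc (0:ℝ) 1) (Icc (0:ℝ) 1) :=
    fun p hp => hmaps p hp
  have mk_int : ∀ (C : ℝ → ℝ), ContinuousOn C (Icc (0:ℝ) 1) → ∀ a : ℝ,
      IntegrableOn (fun p => u (a - C (1 - p))) (Icc (0:ℝ) 1) μ := by
    intro C hC a
    apply ContinuousOn.integrableOn_compact isCompact_Icc
    exact hu_diff.continuous.comp_continuousOn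
      (continuousOn_const.sub (hC.comp hsub hmapsTo))
  have int1 := mk_int C1 hC1c (ol σ θ k Qc C1)
  have int2 := mk_int C2 hC2c (ol σ θ k Qc C2)
  have intε : IntegrableOn
      (fun p => u (ol σ θ k Qc (fun p => ε * C1 p + (1 - ε) * C2 p)
        - (ε * C1 (1 - p) + (1 - ε) * C2 (1 - p)))) (Icc (0:ℝ) 1) μ := by
    apply ContinuousOn.integrableOn_compact isCompact_Icc
    apply hu_diff.continuous.comp_continuousOn
    exact continuousOn_const.sub
      ((continuousOn_const.mul (hC1c.comp hsub hmapsTo)).add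
        (continuousOn_const.mul (hC2c.comp hsub hmapsTo)))
  have pt : ∀ p ∈ Icc (0:ℝ) 1,
      ε * u (ol σ θ k Qc C1 - C1 (1 - p)) + (1 - ε) * u (ol σ θ k Qc C2 - C2 (1 - p))
        ≤ u (ol σ θ k Qc (fun p => ε * C1 p + (1 - ε) * C2 p)
            - (ε * C1 (1 - p) + (1 - ε) * C2 (1 - p))) := by
    intro p _
    have hcc := hu_conc.2 (mem_univ (ol σ θ k Qc C1 - C1 (1 - p)))
      (mem_univ (ol σ θ k Qc C2 - C2 (1 - p))) hε0.le
      (by linarith : (0:ℝ) ≤ 1 - ε) (by ring)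
    simp only [smul_eq_mul] at hcc
    refine hcc.trans (hu_mono.monotone ?_)
    nlinarith [okey]
  rw [hJ1, hJ2, hJε, ← integral_const_mul, ← integral_const_mul,
    ← integral_add (int1.const_mul ε) (int2.const_mul (1 - ε))]
  exact setIntegral_mono_on ((int1.const_mul ε).add (int2.const_mul (1 - ε)))
    intε measurableSet_Icc pt
end

section
/- There exists Ḡ ∈ 𝒢 such that J(Ḡ) = sup_{G ∈ 𝒢} J(G); that is, the quantile-formulated insurance problem admits an optimal solution. -/
open MeasureTheory Set

open intervalIntegral Filter BoundedContinuousFunction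

namespace S4


def Clean (h1 g : ℝ → ℝ) : Prop :=
  Measurable g ∧ (∀ t, 0 ≤ g t) ∧ (∀ t, g t ≤ h1 t)

noncomputable def Prim (g : ℝ → ℝ) (p : ℝ) : ℝ := ∫ t in (0:ℝ)..p, g t

theorem prim_sub {g : ℝ → ℝ} (hg : Integrable g) (a b : ℝ) :
    Prim g b - Prim g a = ∫ t in a..b, g t := by
  have := intervalIntegral.integral_add_adjacent_intervals
    (a := 0) (b := a) (c := b) hg.intervalIntegrable hg.intervalIntegrable
  unfold Prim; linarith [this]

theorem prim_zero (g : ℝ → ℝ) : Prim g 0 = 0 := by simp [Prim]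

theorem prim_continuous {g : ℝ → ℝ} (hg : Integrable g) : Continuous (Prim g) :=
  intervalIntegral.continuous_primitive (fun _ _ => hg.intervalIntegrable) 0

theorem Clean.integrable {h1 g : ℝ → ℝ} (h1int : Integrable h1) (hg : Clean h1 g) :
    Integrable g := by
  refine h1int.mono' hg.1.aestronglyMeasurable (Filter.Eventually.of_forall fun t => ?_)
  rw [Real.norm_eq_abs, abs_of_nonneg (hg.2.1 t)]; exact hg.2.2 t


theorem prim_clamp {h1 : ℝ → ℝ}
    (h1supp : ∀ t, t ∉ Icc (0:ℝ) 1 → h1 t = 0) (h1int : Integrable h1) (p : ℝ) :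
    Prim h1 p = Prim h1 (min 1 (max 0 p)) := by
  rcases le_total p 0 with hp | hp
  · have h0 : min 1 (max 0 p) = 0 := by
      rw [max_eq_left hp]; simp
    rw [h0, prim_zero]
    have : Prim h1 0 - Prim h1 p = ∫ t in p..(0:ℝ), h1 t := prim_sub h1int p 0
    have hz : (∫ t in p..(0:ℝ), h1 t) = 0 := by
      rw [intervalIntegral.integral_of_le hp]
      apply setIntegral_eq_zero_of_ae_eq_zero
      filter_upwards [(Countable.ae_notMem (countable_singleton (0:ℝ)) volume : _)]
        with t ht hmem
      exact h1supp t (fun hic => ht (le_antisymm (hmem.2) hic.1))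
    rw [prim_zero] at this; linarith
  · rcases le_total 1 p with hp1 | hp1
    · have h0 : min 1 (max 0 p) = 1 := by
        rw [max_eq_right hp]; simp [hp1]
      rw [h0]
      have : Prim h1 p - Prim h1 1 = ∫ t in (1:ℝ)..p, h1 t := prim_sub h1int 1 p
      have hz : (∫ t in (1:ℝ)..p, h1 t) = 0 := by
        rw [intervalIntegral.integral_of_le hp1]
        apply setIntegral_eq_zero_of_ae_eq_zero
        refine Filter.Eventually.of_forall fun t ht => ?_
        exact h1supp t (fun hic => absurd hic.2 (not_le.2 ht.1))
      linarith
    · have h0 : min 1 (max 0 p) = p := by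
        rw [max_eq_right hp]; simp [hp1]
      rw [h0]

theorem Clean.supp {h1 g : ℝ → ℝ} (h1supp : ∀ t, t ∉ Icc (0:ℝ) 1 → h1 t = 0)
    (hg : Clean h1 g) : ∀ t, t ∉ Icc (0:ℝ) 1 → g t = 0 := fun t ht =>
  le_antisymm (by rw [← h1supp t ht]; exact hg.2.2 t) (hg.2.1 t)

theorem clamp_mem (p : ℝ) : min 1 (max 0 p) ∈ Icc (0:ℝ) 1 :=
  ⟨le_min zero_le_one (le_max_left 0 p), min_le_left _ _⟩

theorem prim_bounds {h1 g : ℝ → ℝ} (h1nn : ∀ t, 0 ≤ h1 t) (h1int : Integrable h1)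
    (hg : Clean h1 g) {p : ℝ} (hp : p ∈ Icc (0:ℝ) 1) :
    0 ≤ Prim g p ∧ Prim g p ≤ Prim h1 1 := by
  have hgi := hg.integrable h1int
  have hz := prim_zero g
  have hz1 := prim_zero h1
  have h0 : 0 ≤ ∫ t in (0:ℝ)..p, g t :=
    intervalIntegral.integral_nonneg hp.1 (fun t _ => hg.2.1 t)
  have h0' := prim_sub hgi 0 p
  have h1le : (∫ t in (0:ℝ)..p, g t) ≤ ∫ t in (0:ℝ)..p, h1 t :=
    intervalIntegral.integral_mono_on hp.1 hgi.intervalIntegrable h1int.intervalIntegrable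
      (fun t _ => hg.2.2 t)
  have h1' := prim_sub h1int 0 p
  have h2' := prim_sub h1int p 1
  have h3 : 0 ≤ ∫ t in p..1, h1 t :=
    intervalIntegral.integral_nonneg hp.2 (fun t _ => h1nn t)
  constructor <;> linarith

/-- Global bound on `|Prim g|` for clean `g`. -/
theorem prim_abs_le {h1 g : ℝ → ℝ} (h1nn : ∀ t, 0 ≤ h1 t)
    (h1supp : ∀ t, t ∉ Icc (0:ℝ) 1 → h1 t = 0) (h1int : Integrable h1)
    (hg : Clean h1 g) (x : ℝ) : |Prim g x| ≤ Prim h1 1 := by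
  rw [prim_clamp (hg.supp h1supp) (hg.integrable h1int) x]
  have := prim_bounds h1nn h1int hg (clamp_mem x)
  rw [abs_of_nonneg this.1]; exact this.2

/-- Bound on `|u x|` from monotonicity. -/
theorem u_abs_le {u : ℝ → ℝ} (hu : Monotone u) {x R : ℝ} (hx : |x| ≤ R) :
    |u x| ≤ max |u (-R)| |u R| := by
  have h1 : u x ≤ u R := hu (by linarith [le_abs_self x])
  have h2 : u (-R) ≤ u x := hu (by linarith [neg_abs_le x])
  refine abs_le.2 ⟨?_, ?_⟩
  · calc -(max |u (-R)| |u R|) ≤ -|u (-R)| := neg_le_neg (le_max_left _ _)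
      _ ≤ u (-R) := neg_abs_le _
      _ ≤ u x := h2
  · calc u x ≤ u R := h1
      _ ≤ |u R| := le_abs_self _
      _ ≤ max |u (-R)| |u R| := le_max_right _ _

section bounds

variable {h1 : ℝ → ℝ} (h1nn : ∀ t, 0 ≤ h1 t) (h1int : Integrable h1) {q : ℝ → ℝ}
  (hq1 : ∀ p ∈ Icc (0:ℝ) 1, q p = Prim h1 p)

theorem q_integrableOn (h1int : Integrable h1) (hq1 : ∀ p ∈ Icc (0:ℝ) 1, q p = Prim h1 p) :
    IntegrableOn q (Ioc (0:ℝ) 1) := by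
  have hH : IntegrableOn (Prim h1) (Ioc (0:ℝ) 1) :=
    ((prim_continuous h1int).continuousOn.integrableOn_Icc).mono_set Ioc_subset_Icc_self
  exact hH.congr_fun (fun p hp => (hq1 p (Ioc_subset_Icc_self hp)).symm) measurableSet_Ioc

/-- uniform bound on `ol` over clean densities. -/
theorem ol_bound (σ θ k : ℝ) (hσ : 0 < σ) (h1nn : ∀ t, 0 ≤ h1 t)
    (h1supp : ∀ t, t ∉ Icc (0:ℝ) 1 → h1 t = 0) (h1int : Integrable h1)
    (hq1 : ∀ p ∈ Icc (0:ℝ) 1, q p = Prim h1 p) {g : ℝ → ℝ} (hg : Clean h1 g) :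
    |ol σ θ k q (Prim g)|
      ≤ σ * (Prim h1 1)^2 + σ * (Prim h1 1)^2
        + 2 * σ * ((∫ t in Ioc (0:ℝ) 1, |q t|) * Prim h1 1)
        + (|θ| + 2 * σ * (∫ t in Ioc (0:ℝ) 1, |q t|)) * Prim h1 1 + |k| := by
  set M := Prim h1 1 with hM
  set Q := ∫ t in Ioc (0:ℝ) 1, |q t| with hQ
  have hM0 : 0 ≤ M := intervalIntegral.integral_nonneg zero_le_one (fun t _ => h1nn t)
  have hQ0 : 0 ≤ Q := setIntegral_nonneg measurableSet_Ioc (fun t _ => abs_nonneg _)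
  have hPb : ∀ x ∈ Ioc (0:ℝ) 1, 0 ≤ Prim g x ∧ Prim g x ≤ M := fun x hx =>
    prim_bounds h1nn h1int hg ⟨hx.1.le, hx.2⟩
  have hvol : (volume (Ioc (0:ℝ) 1)).toReal = 1 := by
    rw [Real.volume_Ioc]; simp
  have hIoc_fin : volume (Ioc (0:ℝ) 1) < ⊤ := measure_Ioc_lt_top
  set A := ∫ t in Ioc (0:ℝ) 1, Prim g t with hA
  set B := ∫ t in Ioc (0:ℝ) 1, (Prim g t)^2 with hB
  set Cq := ∫ t in Ioc (0:ℝ) 1, q t * Prim g t with hCq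
  set Q₀ := ∫ t in Ioc (0:ℝ) 1, q t with hQ₀
  have hAle : |A| ≤ M := by
    have := norm_setIntegral_le_of_norm_le_const (μ := volume) (s := Ioc (0:ℝ) 1)
      (f := Prim g) (C := M) hIoc_fin (fun x hx => by
        rw [Real.norm_eq_abs, abs_of_nonneg (hPb x hx).1]; exact (hPb x hx).2)
    rw [Real.norm_eq_abs, measureReal_def, hvol, mul_one] at this
    exact this
  have hBle : 0 ≤ B ∧ B ≤ M^2 := by
    constructor
    · exact setIntegral_nonneg measurableSet_Ioc (fun t _ => sq_nonneg _)
    · have := norm_setIntegral_le_of_norm_le_const (μ := volume) (s := Ioc (0:ℝ) 1)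
        (f := fun t => (Prim g t)^2) (C := M^2) hIoc_fin (fun x hx => by
          rw [Real.norm_eq_abs, abs_of_nonneg (sq_nonneg _)]
          exact pow_le_pow_left₀ (hPb x hx).1 (hPb x hx).2 2)
      rw [Real.norm_eq_abs, measureReal_def, hvol, mul_one] at this
      exact (abs_le.1 this).2
  have hqI : IntegrableOn q (Ioc (0:ℝ) 1) := q_integrableOn h1int hq1
  have hqPI : IntegrableOn (fun t => q t * Prim g t) (Ioc (0:ℝ) 1) := by
    have h2 : IntegrableOn (fun t => Prim g t * q t) (Ioc (0:ℝ) 1) :=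
      hqI.bdd_mul (prim_continuous (hg.integrable h1int)).aestronglyMeasurable
        (Eventually.of_forall fun x => by
          rw [Real.norm_eq_abs]; exact prim_abs_le h1nn h1supp h1int hg x)
    exact h2.congr_fun (fun t _ => mul_comm _ _) measurableSet_Ioc
  have hCqle : |Cq| ≤ Q * M := by
    calc |Cq| ≤ ∫ t in Ioc (0:ℝ) 1, |q t * Prim g t| := by
          rw [hCq, ← Real.norm_eq_abs]
          exact (MeasureTheory.norm_integral_le_integral_norm _).trans (le_of_eq (by simp [Real.norm_eq_abs, abs_mul]))
      _ ≤ ∫ t in Ioc (0:ℝ) 1, |q t| * M := by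
          refine setIntegral_mono_on hqPI.abs (hqI.abs.mul_const M) measurableSet_Ioc
            (fun x hx => ?_)
          rw [abs_mul]
          exact mul_le_mul_of_nonneg_left (by rw [abs_of_nonneg (hPb x hx).1]; exact (hPb x hx).2)
            (abs_nonneg _)
      _ = Q * M := by rw [hQ, ← MeasureTheory.integral_mul_const]
  have hQ₀le : |Q₀| ≤ Q := by
    rw [hQ₀, hQ, ← Real.norm_eq_abs]
    exact (MeasureTheory.norm_integral_le_integral_norm _).trans (le_of_eq (by simp [Real.norm_eq_abs]))
  have holeq : ol σ θ k q (Prim g) = σ * A^2 - σ*B + 2*σ*Cq + (θ - 2*σ*Q₀)*A + k := by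
    unfold ol
    simp only [intervalIntegral.integral_of_le zero_le_one]
    rfl
  rw [holeq]
  have e1 : |σ*A^2 - σ*B| ≤ σ*M^2 + σ*M^2 := by
    have hA2 : A^2 ≤ M^2 := sq_le_sq' (by linarith [abs_le.1 hAle]) (abs_le.1 hAle).2
    exact abs_le.2 ⟨by nlinarith [hBle.1, hBle.2, sq_nonneg A], by nlinarith [hBle.1, hBle.2]⟩
  have e2 : |2*σ*Cq| ≤ 2*σ*(Q*M) := by
    rw [abs_mul, abs_of_nonneg (by positivity : (0:ℝ) ≤ 2*σ)]
    exact mul_le_mul_of_nonneg_left hCqle (by positivity)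
  have e3 : |(θ - 2*σ*Q₀)*A| ≤ (|θ| + 2*σ*Q)*M := by
    rw [abs_mul]
    refine mul_le_mul ?_ hAle (abs_nonneg _) (by positivity)
    calc |θ - 2*σ*Q₀| ≤ |θ| + |2*σ*Q₀| := abs_sub θ _
      _ ≤ |θ| + 2*σ*Q := by
          rw [abs_mul, abs_of_nonneg (by positivity : (0:ℝ) ≤ 2*σ)]
          exact add_le_add_right (mul_le_mul_of_nonneg_left hQ₀le (by positivity)) _
  calc |σ*A^2 - σ*B + 2*σ*Cq + (θ - 2*σ*Q₀)*A + k|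
      ≤ |σ*A^2 - σ*B + 2*σ*Cq + (θ - 2*σ*Q₀)*A| + |k| := abs_add_le _ _
    _ ≤ |σ*A^2 - σ*B + 2*σ*Cq| + |(θ - 2*σ*Q₀)*A| + |k| := by
        linarith [abs_add_le (σ*A^2 - σ*B + 2*σ*Cq) ((θ - 2*σ*Q₀)*A)]
    _ ≤ |σ*A^2 - σ*B| + |2*σ*Cq| + |(θ - 2*σ*Q₀)*A| + |k| := by
        linarith [abs_add_le (σ*A^2 - σ*B) (2*σ*Cq)]
    _ ≤ σ*M^2 + σ*M^2 + 2*σ*(Q*M) + (|θ| + 2*σ*Q)*M + |k| := by linarith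


/-- Convenience: the uniform `ol` bound constant. -/
noncomputable def olC (σ θ k M Q : ℝ) : ℝ :=
  σ*M^2 + σ*M^2 + 2*σ*(Q*M) + (|θ| + 2*σ*Q)*M + |k|

/-- Convenience: the uniform bound on the `J` integrand. -/
noncomputable def uB (u : ℝ → ℝ) (R : ℝ) : ℝ := max |u (-R)| |u R|

theorem J_integrand_bound (σ θ k : ℝ) (hσ : 0 < σ) {u : ℝ → ℝ} (hu_mono : Monotone u)
    (h1nn : ∀ t, 0 ≤ h1 t) (h1supp : ∀ t, t ∉ Icc (0:ℝ) 1 → h1 t = 0)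
    (h1int : Integrable h1) (hq1 : ∀ p ∈ Icc (0:ℝ) 1, q p = Prim h1 p)
    {g : ℝ → ℝ} (hg : Clean h1 g) (p : ℝ) :
    |u (ol σ θ k q (Prim g) - Prim g (1 - p))|
      ≤ uB u (olC σ θ k (Prim h1 1) (∫ t in Ioc (0:ℝ) 1, |q t|) + Prim h1 1) := by
  refine u_abs_le hu_mono ?_
  have h2 := ol_bound σ θ k hσ h1nn h1supp h1int hq1 hg
  have h3 := prim_abs_le h1nn h1supp h1int hg (1 - p)
  calc |ol σ θ k q (Prim g) - Prim g (1 - p)|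
      ≤ |ol σ θ k q (Prim g)| + |Prim g (1 - p)| := abs_sub _ _
    _ ≤ _ := by unfold olC; linarith

theorem J_congr (σ θ k : ℝ) (q u : ℝ → ℝ) (μ : Measure ℝ) {G G' : ℝ → ℝ}
    (hGG' : ∀ p ∈ Icc (0:ℝ) 1, G p = G' p) : J σ θ k q u μ G = J σ θ k q u μ G' := by
  have key : ∀ f f' : ℝ → ℝ, (∀ t ∈ Icc (0:ℝ) 1, f t = f' t) →
      (∫ t in (0:ℝ)..1, f t) = ∫ t in (0:ℝ)..1, f' t := fun f f' hf =>
    intervalIntegral.integral_congr (fun t ht => hf t (by rwa [uIcc_of_le zero_le_one] at ht))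
  have hol : ol σ θ k q G = ol σ θ k q G' := by
    unfold ol
    rw [key G G' hGG', key (fun t => (G t)^2) (fun t => (G' t)^2) (fun t ht => by simp only [hGG' t ht]),
      key (fun t => q t * G t) (fun t => q t * G' t) (fun t ht => by simp only [hGG' t ht])]
  unfold J
  refine setIntegral_congr_fun measurableSet_Icc (fun p hp => ?_)
  rw [hol, hGG' (1-p) ⟨by linarith [hp.2], by linarith [hp.1]⟩]

theorem J_tendsto (σ θ k : ℝ) (hσ : 0 < σ) {u : ℝ → ℝ} (hu_mono : Monotone u)
    (hu_cont : Continuous u) (μ : Measure ℝ) [IsProbabilityMeasure μ]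
    (h1nn : ∀ t, 0 ≤ h1 t) (h1supp : ∀ t, t ∉ Icc (0:ℝ) 1 → h1 t = 0)
    (h1int : Integrable h1) (hq1 : ∀ p ∈ Icc (0:ℝ) 1, q p = Prim h1 p)
    (g : ℕ → ℝ → ℝ) (hg : ∀ n, Clean h1 (g n)) {Gb : ℝ → ℝ} (hGbc : Continuous Gb)
    (hconv : ∀ p ∈ Icc (0:ℝ) 1, Tendsto (fun n => Prim (g n) p) atTop (nhds (Gb p))) :
    Tendsto (fun n => J σ θ k q u μ (Prim (g n))) atTop (nhds (J σ θ k q u μ Gb)) := by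
  set M := Prim h1 1 with hM
  have hM0 : 0 ≤ M := intervalIntegral.integral_nonneg zero_le_one (fun t _ => h1nn t)
  have hPabs : ∀ n x, |Prim (g n) x| ≤ M := fun n x => prim_abs_le h1nn h1supp h1int (hg n) x
  have hmemIoc : ∀ᵐ t ∂(volume.restrict (Ioc (0:ℝ) 1)), t ∈ Ioc (0:ℝ) 1 :=
    ae_restrict_mem measurableSet_Ioc
  haveI : IsFiniteMeasure (volume.restrict (Ioc (0:ℝ) 1)) :=
    ⟨by rw [Measure.restrict_apply_univ]; exact measure_Ioc_lt_top⟩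
  have hqI : IntegrableOn q (Ioc (0:ℝ) 1) := q_integrableOn h1int hq1
  have hPaesm : ∀ n, AEStronglyMeasurable (fun t => Prim (g n) t)
      (volume.restrict (Ioc (0:ℝ) 1)) := fun n =>
    (prim_continuous ((hg n).integrable h1int)).aestronglyMeasurable
  have hA : Tendsto (fun n => ∫ t in Ioc (0:ℝ) 1, Prim (g n) t) atTop
      (nhds (∫ t in Ioc (0:ℝ) 1, Gb t)) := by
    refine tendsto_integral_of_dominated_convergence (fun _ => M) hPaesm
      (integrable_const M) (fun n => Eventually.of_forall fun t => ?_) ?_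
    · rw [Real.norm_eq_abs]; exact hPabs n t
    · filter_upwards [hmemIoc] with t ht
      exact hconv t (Ioc_subset_Icc_self ht)
  have hB : Tendsto (fun n => ∫ t in Ioc (0:ℝ) 1, (Prim (g n) t)^2) atTop
      (nhds (∫ t in Ioc (0:ℝ) 1, (Gb t)^2)) := by
    refine tendsto_integral_of_dominated_convergence (fun _ => M^2)
      (fun n => ((prim_continuous ((hg n).integrable h1int)).pow 2).aestronglyMeasurable)
      (integrable_const _) (fun n => Eventually.of_forall fun t => ?_) ?_
    · rw [Real.norm_eq_abs, abs_of_nonneg (sq_nonneg _)]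
      exact sq_le_sq' (by linarith [abs_le.1 (hPabs n t)]) (abs_le.1 (hPabs n t)).2
    · filter_upwards [hmemIoc] with t ht
      exact (hconv t (Ioc_subset_Icc_self ht)).pow 2
  have hCq : Tendsto (fun n => ∫ t in Ioc (0:ℝ) 1, q t * Prim (g n) t) atTop
      (nhds (∫ t in Ioc (0:ℝ) 1, q t * Gb t)) := by
    refine tendsto_integral_of_dominated_convergence (fun t => |q t| * M)
      (fun n => hqI.aestronglyMeasurable.mul (hPaesm n))
      (hqI.abs.mul_const M) (fun n => Eventually.of_forall fun t => ?_) ?_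
    · rw [Real.norm_eq_abs, abs_mul]
      exact mul_le_mul_of_nonneg_left (hPabs n t) (abs_nonneg _)
    · filter_upwards [hmemIoc] with t ht
      exact (hconv t (Ioc_subset_Icc_self ht)).const_mul (q t)
  have holt : Tendsto (fun n => ol σ θ k q (Prim (g n))) atTop (nhds (ol σ θ k q Gb)) := by
    simp only [ol, intervalIntegral.integral_of_le zero_le_one]
    exact ((((hA.pow 2).const_mul σ).sub (hB.const_mul σ)).add (hCq.const_mul (2*σ))).add
      (hA.const_mul (θ - 2*σ*(∫ t in Ioc (0:ℝ) 1, q t))) |>.add_const k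
  unfold J
  refine tendsto_integral_of_dominated_convergence
    (fun _ => uB u (olC σ θ k M (∫ t in Ioc (0:ℝ) 1, |q t|) + M)) (fun n => ?_)
    (integrable_const _) (fun n => Eventually.of_forall fun p => ?_) ?_
  · exact (hu_cont.comp (continuous_const.sub
      ((prim_continuous ((hg n).integrable h1int)).comp
        (continuous_const.sub continuous_id)))).aestronglyMeasurable
  · rw [Real.norm_eq_abs]
    exact J_integrand_bound σ θ k hσ hu_mono h1nn h1supp h1int hq1 (hg n) p
  · filter_upwards [ae_restrict_mem measurableSet_Icc] with p hp
    exact (hu_cont.tendsto _).comp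
      (holt.sub (hconv (1-p) ⟨by linarith [hp.2], by linarith [hp.1]⟩))

theorem J_abs_le (σ θ k : ℝ) (hσ : 0 < σ) {u : ℝ → ℝ} (hu_mono : Monotone u)
    (μ : Measure ℝ) [IsProbabilityMeasure μ]
    (h1nn : ∀ t, 0 ≤ h1 t) (h1supp : ∀ t, t ∉ Icc (0:ℝ) 1 → h1 t = 0)
    (h1int : Integrable h1) (hq1 : ∀ p ∈ Icc (0:ℝ) 1, q p = Prim h1 p)
    {g : ℝ → ℝ} (hg : Clean h1 g) :
    |J σ θ k q u μ (Prim g)|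
      ≤ uB u (olC σ θ k (Prim h1 1) (∫ t in Ioc (0:ℝ) 1, |q t|) + Prim h1 1) := by
  set Bu := uB u (olC σ θ k (Prim h1 1) (∫ t in Ioc (0:ℝ) 1, |q t|) + Prim h1 1) with hBu
  have hBu0 : 0 ≤ Bu := le_trans (abs_nonneg _) (le_max_left _ _)
  have h2 : |J σ θ k q u μ (Prim g)| ≤ Bu * (μ (Icc (0:ℝ) 1)).toReal := by
    rw [← Real.norm_eq_abs]
    exact norm_setIntegral_le_of_norm_le_const (measure_lt_top μ _)
      (fun p _ => by
        rw [Real.norm_eq_abs]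
        exact J_integrand_bound σ θ k hσ hu_mono h1nn h1supp h1int hq1 hg p)
  refine h2.trans ?_
  have : (μ (Icc (0:ℝ) 1)).toReal ≤ 1 := by
    rw [show (1:ℝ) = (μ univ).toReal by simp]
    exact ENNReal.toReal_mono (measure_ne_top μ _) (measure_mono (subset_univ _))
  nlinarith

end bounds


theorem prim_le_prim_incr {h1 g : ℝ → ℝ} (h1int : Integrable h1) (hg : Clean h1 g) {a b : ℝ}
    (hab : a ≤ b) :
    0 ≤ Prim g b - Prim g a ∧ Prim g b - Prim g a ≤ Prim h1 b - Prim h1 a := by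
  constructor
  · have h2 := prim_sub (hg.integrable h1int) a b
    have h3 : 0 ≤ ∫ t in a..b, g t :=
      intervalIntegral.integral_nonneg hab (fun t _ => hg.2.1 t)
    linarith
  · rw [prim_sub (hg.integrable h1int) a b, prim_sub h1int a b]
    exact intervalIntegral.integral_mono_on hab ((hg.integrable h1int)).intervalIntegrable
      h1int.intervalIntegrable (fun t _ => hg.2.2 t)

theorem prim_dist_le {h1 g : ℝ → ℝ} (h1int : Integrable h1) (hg : Clean h1 g) (y z : ℝ) :
    dist (Prim g y) (Prim g z) ≤ dist (Prim h1 y) (Prim h1 z) := by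
  rcases le_total z y with hzy | hzy
  · have h2 := prim_le_prim_incr h1int hg hzy
    rw [Real.dist_eq, Real.dist_eq, abs_of_nonneg (by linarith [h2.1]),
      abs_of_nonneg (by linarith [h2.1, h2.2])]
    exact h2.2
  · have h2 := prim_le_prim_incr h1int hg hzy
    rw [dist_comm (Prim g y), dist_comm (Prim h1 y), Real.dist_eq, Real.dist_eq,
      abs_of_nonneg (by linarith [h2.1]), abs_of_nonneg (by linarith [h2.1, h2.2])]
    exact h2.2

/-- Key closedness lemma. -/
theorem limit_is_prim {h1 : ℝ → ℝ} (h1m : Measurable h1) (h1nn : ∀ t, 0 ≤ h1 t)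
    (h1supp : ∀ t, t ∉ Icc (0:ℝ) 1 → h1 t = 0) (h1int : Integrable h1)
    (g : ℕ → ℝ → ℝ) (hg : ∀ n, Clean h1 (g n))
    (Gb : ℝ → ℝ) (hGbc : Continuous Gb)
    (hclamp : ∀ p, Gb p = Gb (min 1 (max 0 p)))
    (hconv : ∀ p ∈ Icc (0:ℝ) 1, Tendsto (fun n => Prim (g n) p) atTop (nhds (Gb p))) :
    ∃ gb : ℝ → ℝ, Clean h1 gb ∧ ∀ p ∈ Icc (0:ℝ) 1, Gb p = Prim gb p := by
  have hG0 : Gb 0 = 0 := by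
    refine tendsto_nhds_unique (hconv 0 ⟨le_rfl, zero_le_one⟩) ?_
    simpa [prim_zero] using (tendsto_const_nhds : Tendsto (fun _ : ℕ => (0:ℝ)) atTop _)
  -- increments on Icc
  have hinc : ∀ a ∈ Icc (0:ℝ) 1, ∀ b ∈ Icc (0:ℝ) 1, a ≤ b →
      0 ≤ Gb b - Gb a ∧ Gb b - Gb a ≤ Prim h1 b - Prim h1 a := by
    intro a ha b hb hab
    have ht : Tendsto (fun n => Prim (g n) b - Prim (g n) a) atTop (nhds (Gb b - Gb a)) :=
      (hconv b hb).sub (hconv a ha)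
    constructor
    · refine ge_of_tendsto ht (Eventually.of_forall fun n => ?_)
      have := prim_sub ((hg n).integrable h1int) a b
      have h2 : 0 ≤ ∫ t in a..b, g n t :=
        intervalIntegral.integral_nonneg hab (fun t _ => (hg n).2.1 t)
      linarith
    · refine le_of_tendsto ht (Eventually.of_forall fun n => ?_)
      rw [prim_sub ((hg n).integrable h1int) a b, prim_sub h1int a b]
      exact intervalIntegral.integral_mono_on hab
        (((hg n).integrable h1int).intervalIntegrable) h1int.intervalIntegrable
        (fun t _ => (hg n).2.2 t)
  have hclmem : ∀ p : ℝ, min 1 (max 0 p) ∈ Icc (0:ℝ) 1 := by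
    intro p
    constructor
    · exact le_min zero_le_one (le_max_left 0 p)
    · exact min_le_left _ _
  have hclmono : Monotone (fun p : ℝ => min 1 (max 0 p)) := fun a b hab =>
    min_le_min le_rfl (max_le_max le_rfl hab)
  -- global increments
  have hincg : ∀ a b : ℝ, a ≤ b →
      0 ≤ Gb b - Gb a ∧ Gb b - Gb a ≤ Prim h1 b - Prim h1 a := by
    intro a b hab
    have h1 := hinc _ (hclmem a) _ (hclmem b) (hclmono hab)
    rw [hclamp a, hclamp b, prim_clamp h1supp h1int a, prim_clamp h1supp h1int b]
    exact h1
  have hmono : Monotone Gb := fun a b hab => by linarith [(hincg a b hab).1]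
  have hHmono : Monotone (Prim h1) := by
    intro a b hab
    have := prim_sub h1int a b
    have h2 : 0 ≤ ∫ t in a..b, h1 t :=
      intervalIntegral.integral_nonneg hab (fun t _ => h1nn t)
    linarith
  have hDmono : Monotone (fun p => Prim h1 p - Gb p) := fun a b hab => by
    have := (hincg a b hab).2; simp only; linarith
  -- Stieltjes functions
  set SG : StieltjesFunction ℝ :=
    { toFun := Gb
      mono' := hmono
      right_continuous' := fun x => (hGbc.continuousAt).continuousWithinAt } with hSG
  set SD : StieltjesFunction ℝ :=
    { toFun := fun p => Prim h1 p - Gb p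
      mono' := hDmono
      right_continuous' := fun x =>
        (((prim_continuous h1int).sub hGbc).continuousAt).continuousWithinAt } with hSD
  -- finiteness
  have hGbbot : Tendsto Gb atBot (nhds (Gb 0)) := by
    refine Tendsto.congr' ?_ (tendsto_const_nhds)
    filter_upwards [Iic_mem_atBot (0:ℝ)] with p hp
    rw [hclamp p, max_eq_left hp]; simp
  have hGbtop : Tendsto Gb atTop (nhds (Gb 1)) := by
    refine Tendsto.congr' ?_ (tendsto_const_nhds)
    filter_upwards [Ici_mem_atTop (1:ℝ)] with p hp
    rw [hclamp p, max_eq_right (le_trans zero_le_one hp), min_eq_left hp]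
  have hHbot : Tendsto (Prim h1) atBot (nhds (Prim h1 0)) := by
    refine Tendsto.congr' ?_ (tendsto_const_nhds)
    filter_upwards [Iic_mem_atBot (0:ℝ)] with p hp
    rw [prim_clamp h1supp h1int p, max_eq_left hp]; simp
  have hHtop : Tendsto (Prim h1) atTop (nhds (Prim h1 1)) := by
    refine Tendsto.congr' ?_ (tendsto_const_nhds)
    filter_upwards [Ici_mem_atTop (1:ℝ)] with p hp
    rw [prim_clamp h1supp h1int p, max_eq_right (le_trans zero_le_one hp), min_eq_left hp]
  haveI : IsFiniteMeasure SG.measure := SG.isFiniteMeasure hGbbot hGbtop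
  haveI : IsFiniteMeasure SD.measure := SD.isFiniteMeasure (hHbot.sub hGbbot) (hHtop.sub hGbtop)
  haveI : IsFiniteMeasure (SG.measure + SD.measure) := by infer_instance
  -- identification with withDensity
  have hνρ : SG.measure + SD.measure
      = volume.withDensity (fun t => ENNReal.ofReal (h1 t)) := by
    refine Measure.ext_of_Ioc _ _ (fun a b hab => ?_)
    have hIoc : (volume.withDensity (fun t => ENNReal.ofReal (h1 t))) (Ioc a b)
        = ENNReal.ofReal (Prim h1 b - Prim h1 a) := by
      rw [withDensity_apply _ measurableSet_Ioc,
        ← ofReal_integral_eq_lintegral_ofReal (h1int.integrableOn)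
          (Eventually.of_forall fun t => h1nn t),
        prim_sub h1int a b, intervalIntegral.integral_of_le hab.le]
    rw [Measure.add_apply, hIoc, SG.measure_Ioc, SD.measure_Ioc]
    simp only [hSG, hSD]
    rw [← ENNReal.ofReal_add (hincg a b hab.le).1 (by linarith [(hincg a b hab.le).2])]
    ring_nf
  have hle : SG.measure ≤ volume.withDensity (fun t => ENNReal.ofReal (h1 t)) := by
    rw [← hνρ]; exact Measure.le_add_right le_rfl
  have hac : SG.measure ≪ volume :=
    (hle.absolutelyContinuous).trans (withDensity_absolutelyContinuous _ _)
  -- the density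
  have hrnwd := Measure.rnDeriv_withDensity volume
    (h1m.ennreal_ofReal : Measurable fun t => ENNReal.ofReal (h1 t))
  have hrnadd := Measure.rnDeriv_add SG.measure SD.measure volume
  have hbound : ∀ᵐ t ∂(volume : Measure ℝ),
      SG.measure.rnDeriv volume t ≤ ENNReal.ofReal (h1 t) := by
    rw [← hνρ] at hrnwd
    filter_upwards [hrnwd, hrnadd] with t h2 h3
    rw [← h2, h3]
    exact le_add_right le_rfl
  set gbr : ℝ → ℝ := fun t => (SG.measure.rnDeriv volume t).toReal with hgbr
  have hgbr_le : ∀ᵐ t ∂(volume : Measure ℝ), gbr t ≤ h1 t := by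
    filter_upwards [hbound] with t h2
    calc (SG.measure.rnDeriv volume t).toReal
        ≤ (ENNReal.ofReal (h1 t)).toReal := ENNReal.toReal_mono ENNReal.ofReal_ne_top h2
      _ = h1 t := ENNReal.toReal_ofReal (h1nn t)
  refine ⟨fun t => max 0 (min (gbr t) (h1 t)), ⟨?_, fun t => le_max_left _ _, fun t => ?_⟩, ?_⟩
  · exact (measurable_const.max ((Measure.measurable_rnDeriv _ _).ennreal_toReal.min h1m))
  · exact max_le (h1nn t) (min_le_right _ _)
  · intro p hp
    have hea : ∀ᵐ t ∂(volume : Measure ℝ), max 0 (min (gbr t) (h1 t)) = gbr t := by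
      filter_upwards [hgbr_le] with t h2
      rw [min_eq_left h2, max_eq_right (ENNReal.toReal_nonneg)]
    have : Prim (fun t => max 0 (min (gbr t) (h1 t))) p = Prim gbr p := by
      unfold Prim
      refine intervalIntegral.integral_congr_ae ?_
      filter_upwards [hea] with t h2 _
      exact h2
    rw [this]
    have h2 : Prim gbr p = (SG.measure (Ioc 0 p)).toReal := by
      unfold Prim
      rw [intervalIntegral.integral_of_le hp.1,
        Measure.setIntegral_toReal_rnDeriv hac (Ioc 0 p), measureReal_def]
    rw [h2, SG.measure_Ioc]
    simp only [hSG]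
    rw [hG0, sub_zero, ENNReal.toReal_ofReal]
    have := (hincg 0 p hp.1).1
    linarith [hG0]


end S4

open S4

theorem stmt_4 (σ θ k : ℝ) (hσ : 0 < σ) (hθ : 0 ≤ θ)
    (q h : ℝ → ℝ)
    (hh_int : IntegrableOn h (Icc (0:ℝ) 1))
    (hh_nonneg : ∀ᵐ t ∂(volume.restrict (Icc (0:ℝ) 1)), 0 ≤ h t)
    (hq : ∀ p ∈ Icc (0:ℝ) 1, q p = ∫ t in (0:ℝ)..p, h t)
    (m₀ : ℝ) (hm₀ : m₀ ∈ Ico (0:ℝ) 1)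
    (hq0 : ∀ p ∈ Icc (0:ℝ) m₀, q p = 0)
    (hhpos : ∀ᵐ t ∂(volume.restrict (Ioo m₀ 1)), 0 < h t)
    (u : ℝ → ℝ) (hu_conc : ConcaveOn ℝ univ u) (hu_mono : StrictMono u)
    (hu_diff : Differentiable ℝ u)
    (μ : Measure ℝ) [IsProbabilityMeasure μ] (hμ0 : μ {0} = 0)
    (hμsupp : μ (Icc (0:ℝ) 1)ᶜ = 0) :
    ∃ Gbar : ℝ → ℝ, InG h Gbar ∧ ∀ G : ℝ → ℝ, InG h G → J σ θ k q u μ G ≤ J σ θ k q u μ Gbar := by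
  classical
  -- measurable nonnegative representative of h, supported on [0,1]
  set hmk := hh_int.aestronglyMeasurable.mk h with hhmk
  have hmk_meas : Measurable hmk := hh_int.aestronglyMeasurable.stronglyMeasurable_mk.measurable
  have hmk_ae : h =ᵐ[volume.restrict (Icc (0:ℝ) 1)] hmk := hh_int.aestronglyMeasurable.ae_eq_mk
  set h1 : ℝ → ℝ := indicator (Icc (0:ℝ) 1) (fun t => max (hmk t) 0) with hh1
  have h1m : Measurable h1 := (hmk_meas.max measurable_const).indicator measurableSet_Icc
  have h1nn : ∀ t, 0 ≤ h1 t := fun t => by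
    by_cases ht : t ∈ Icc (0:ℝ) 1
    · rw [hh1, indicator_of_mem ht]; exact le_max_right _ _
    · rw [hh1, indicator_of_notMem ht]
  have h1supp : ∀ t, t ∉ Icc (0:ℝ) 1 → h1 t = 0 := fun t ht => indicator_of_notMem ht _
  have heq : ∀ᵐ t ∂(volume.restrict (Icc (0:ℝ) 1)), h1 t = h t := by
    filter_upwards [ae_restrict_mem measurableSet_Icc, hmk_ae, hh_nonneg] with t ht h2 h3
    rw [hh1, indicator_of_mem ht, ← h2, max_eq_left h3]
  have h1int : Integrable h1 := by
    rw [hh1, integrable_indicator_iff measurableSet_Icc]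
    refine hh_int.congr ?_
    filter_upwards [hmk_ae, hh_nonneg] with t h2 h3
    rw [← h2, max_eq_left h3]
  have hq1 : ∀ p ∈ Icc (0:ℝ) 1, q p = Prim h1 p := by
    intro p hp
    rw [hq p hp]
    unfold Prim
    rw [intervalIntegral.integral_of_le hp.1, intervalIntegral.integral_of_le hp.1]
    refine setIntegral_congr_ae measurableSet_Ioc ?_
    have hsub : Ioc (0:ℝ) p ⊆ Icc (0:ℝ) 1 := fun t ht => ⟨le_of_lt ht.1, ht.2.trans hp.2⟩
    filter_upwards [ae_imp_of_ae_restrict (ae_restrict_of_ae_restrict_of_subset hsub heq)]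
      with t h2 ht
    exact (h2 ht).symm
  -- correspondence between `InG` and clean densities
  have toClean : ∀ G, InG h G → ∃ g, Clean h1 g ∧ ∀ p ∈ Icc (0:ℝ) 1, G p = Prim g p := by
    rintro G ⟨g, gm, gae, hGp⟩
    refine ⟨indicator (Icc (0:ℝ) 1) (fun t => max 0 (min (g t) (h1 t))), ⟨?_, ?_, ?_⟩, ?_⟩
    · exact ((measurable_const.max (gm.min h1m))).indicator measurableSet_Icc
    · intro t; by_cases ht : t ∈ Icc (0:ℝ) 1
      · rw [indicator_of_mem ht]; exact le_max_left _ _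
      · rw [indicator_of_notMem ht]
    · intro t; by_cases ht : t ∈ Icc (0:ℝ) 1
      · rw [indicator_of_mem ht]; exact max_le (h1nn t) (min_le_right _ _)
      · rw [indicator_of_notMem ht]; exact h1nn t
    · intro p hp
      rw [hGp p hp]
      unfold Prim
      rw [intervalIntegral.integral_of_le hp.1, intervalIntegral.integral_of_le hp.1]
      refine setIntegral_congr_ae measurableSet_Ioc ?_
      have hsub : Ioc (0:ℝ) p ⊆ Icc (0:ℝ) 1 := fun t ht => ⟨le_of_lt ht.1, ht.2.trans hp.2⟩
      filter_upwards [ae_imp_of_ae_restrict (ae_restrict_of_ae_restrict_of_subset hsub gae),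
        ae_imp_of_ae_restrict (ae_restrict_of_ae_restrict_of_subset hsub heq)]
        with t h2 h3 h4
      rw [indicator_of_mem (hsub h4), (h3 h4), min_eq_left (h2 h4).2,
        max_eq_right (h2 h4).1]
  have ofClean : ∀ g, Clean h1 g → InG h (Prim g) := by
    intro g hg
    refine ⟨g, hg.1, ?_, fun p hp => rfl⟩
    filter_upwards [heq] with t h2
    exact ⟨hg.2.1 t, (hg.2.2 t).trans_eq h2⟩
  -- supremum setup
  set SJ := J σ θ k q u μ with hSJ
  set Sset := SJ '' {G | InG h G} with hSset
  have hne : (fun _ : ℝ => (0:ℝ)) ∈ {G | InG h G} := by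
    refine ⟨fun _ => 0, measurable_const, ?_, fun p hp => by simp⟩
    filter_upwards [hh_nonneg] with t h2
    exact ⟨le_rfl, h2⟩
  have hSne : Sset.Nonempty := ⟨SJ (fun _ => 0), ⟨_, hne, rfl⟩⟩
  set Bu := uB u (olC σ θ k (Prim h1 1) (∫ t in Ioc (0:ℝ) 1, |q t|) + Prim h1 1) with hBu
  have hmono : Monotone u := hu_mono.monotone
  have hucont : Continuous u := hu_diff.continuous
  have hbddA : BddAbove Sset := by
    refine ⟨Bu, ?_⟩
    rintro y ⟨G, hG, rfl⟩
    obtain ⟨g, hgc, hgp⟩ := toClean G hG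
    calc SJ G = J σ θ k q u μ (Prim g) := J_congr σ θ k q u μ hgp
      _ ≤ Bu := le_trans (le_abs_self _)
          (J_abs_le σ θ k hσ hmono μ h1nn h1supp h1int hq1 hgc)
  set c := sSup Sset with hc
  -- maximizing sequence of clean densities
  have hexists : ∀ n : ℕ, ∃ g, Clean h1 g ∧ c - 1/(n+1) < SJ (Prim g) := by
    intro n
    have hlt : c - 1/((n:ℝ)+1) < c := by
      have h2 : (0:ℝ) < 1/((n:ℝ)+1) := by positivity
      linarith
    obtain ⟨y, ⟨G, hG, rfl⟩, hy⟩ := exists_lt_of_lt_csSup hSne hlt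
    obtain ⟨g, hgc, hgp⟩ := toClean G hG
    refine ⟨g, hgc, ?_⟩
    rw [hSJ] at hy ⊢
    rwa [J_congr σ θ k q u μ hgp] at hy
  choose gseq hgseq hglt using hexists
  have hle_c : ∀ n, SJ (Prim (gseq n)) ≤ c := fun n =>
    le_csSup hbddA ⟨Prim (gseq n), ofClean _ (hgseq n), rfl⟩
  have hJto_c : Tendsto (fun n => SJ (Prim (gseq n))) atTop (nhds c) := by
    refine tendsto_of_tendsto_of_tendsto_of_le_of_le
      (g := fun n : ℕ => c - 1/((n:ℝ)+1)) (h := fun _ : ℕ => c) ?_ tendsto_const_nhds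
      (fun n => (hglt n).le) hle_c
    have h2 : Tendsto (fun n : ℕ => c - 1/((n:ℝ)+1)) atTop (nhds (c - 0)) :=
      tendsto_const_nhds.sub tendsto_one_div_add_atTop_nhds_zero_nat
    simpa using h2
  -- Arzelà–Ascoli
  set M := Prim h1 1 with hMdef
  set A : Set (Icc (0:ℝ) 1 →ᵇ ℝ) :=
    {F | ∃ g, Clean h1 g ∧ ∀ x : Icc (0:ℝ) 1, F x = Prim g ↑x} with hA
  have hin_s : ∀ (F : Icc (0:ℝ) 1 →ᵇ ℝ) (x : Icc (0:ℝ) 1), F ∈ A → F x ∈ Icc (-M) M := by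
    rintro F x ⟨g, hgc, hFg⟩
    rw [hFg x]
    have h2 := abs_le.1 (prim_abs_le h1nn h1supp h1int hgc ↑x)
    exact ⟨h2.1, h2.2⟩
  have hequi : Equicontinuous ((↑) : A → Icc (0:ℝ) 1 → ℝ) := by
    intro x₀
    rw [Metric.equicontinuousAt_iff_right]
    intro ε hε
    have hHc : Tendsto (Prim h1) (nhds (↑x₀:ℝ)) (nhds (Prim h1 ↑x₀)) :=
      (prim_continuous h1int).tendsto _
    have h2 : ∀ᶠ y in nhds (↑x₀:ℝ), dist (Prim h1 y) (Prim h1 ↑x₀) < ε :=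
      Metric.tendsto_nhds.1 hHc ε hε
    have h3 := (continuous_subtype_val.tendsto x₀).eventually h2
    filter_upwards [h3] with x hx i
    obtain ⟨F, g, hgc, hFg⟩ := i
    simp only [hFg]
    calc dist (Prim g ↑x₀) (Prim g ↑x) ≤ dist (Prim h1 ↑x₀) (Prim h1 ↑x) :=
          prim_dist_le h1int hgc _ _
      _ = dist (Prim h1 ↑x) (Prim h1 ↑x₀) := dist_comm _ _
      _ < ε := hx
  have hKc : IsCompact (closure A) :=
    BoundedContinuousFunction.arzela_ascoli (Icc (-M) M) isCompact_Icc A hin_s hequi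
  set Fseq : ℕ → (Icc (0:ℝ) 1 →ᵇ ℝ) := fun n =>
    BoundedContinuousFunction.mkOfCompact
      (ContinuousMap.restrict (Icc (0:ℝ) 1)
        ⟨Prim (gseq n), prim_continuous ((hgseq n).integrable h1int)⟩) with hFseq
  have hmemA : ∀ n, Fseq n ∈ A := fun n => ⟨gseq n, hgseq n, fun x => rfl⟩
  obtain ⟨F, hFcl, φ, hφmono, hφconv⟩ :=
    hKc.isSeqCompact (x := Fseq) (fun n => subset_closure (hmemA n))
  have hptw : ∀ x : Icc (0:ℝ) 1,
      Tendsto (fun n => Prim (gseq (φ n)) ↑x) atTop (nhds (F x)) := by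
    intro x
    have h2 := (continuous_eval_const x).continuousAt.tendsto.comp hφconv
    exact h2
  set Gb : ℝ → ℝ := fun p => F (projIcc 0 1 zero_le_one p) with hGbdef
  have hGbc : Continuous Gb := F.continuous.comp continuous_projIcc
  have hclampv : ∀ p : ℝ, max 0 (min 1 p) = min 1 (max 0 p) := by
    intro p
    rcases le_total p 0 with h0 | h0
    · rw [min_eq_right (h0.trans zero_le_one), max_eq_left h0, min_eq_right zero_le_one]
    · rcases le_total p 1 with h1 | h1
      · rw [min_eq_right h1, max_eq_right h0, min_eq_right h1]
      · rw [min_eq_left h1, max_eq_right zero_le_one, max_eq_right (zero_le_one.trans h1),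
          min_eq_left h1]
  have hclamp : ∀ p, Gb p = Gb (min 1 (max 0 p)) := by
    intro p
    simp only [hGbdef]
    congr 1
    apply Subtype.ext
    rw [coe_projIcc, coe_projIcc]
    have h5 : min 1 (min 1 (max 0 p)) = min 1 (max 0 p) := by rw [← min_assoc, min_self]
    rw [h5, hclampv p, max_eq_right (le_min zero_le_one (le_max_left 0 p))]
  have hconvGb : ∀ p ∈ Icc (0:ℝ) 1,
      Tendsto (fun n => Prim (gseq (φ n)) p) atTop (nhds (Gb p)) := by
    intro p hp
    have h2 := hptw ⟨p, hp⟩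
    have h3 : projIcc (0:ℝ) 1 zero_le_one p = ⟨p, hp⟩ := projIcc_of_mem _ hp
    simp only [hGbdef, h3]
    exact h2
  obtain ⟨gb, hgbc, hgbp⟩ := limit_is_prim h1m h1nn h1supp h1int
    (fun n => gseq (φ n)) (fun n => hgseq (φ n)) Gb hGbc hclamp hconvGb
  have hInG : InG h Gb := by
    refine ⟨gb, hgbc.1, ?_, fun p hp => hgbp p hp⟩
    filter_upwards [heq] with t h2
    exact ⟨hgbc.2.1 t, (hgbc.2.2 t).trans_eq h2⟩
  have hJGb : SJ Gb = c := by
    have h2 : Tendsto (fun n => SJ (Prim (gseq (φ n)))) atTop (nhds (SJ Gb)) :=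
      J_tendsto σ θ k hσ hmono hucont μ h1nn h1supp h1int hq1 _
        (fun n => hgseq (φ n)) hGbc hconvGb
    have h3 : Tendsto (fun n => SJ (Prim (gseq (φ n)))) atTop (nhds c) :=
      hJto_c.comp hφmono.tendsto_atTop
    exact tendsto_nhds_unique h2 h3
  refine ⟨Gb, hInG, fun G hG => ?_⟩
  calc J σ θ k q u μ G = SJ G := rfl
    _ ≤ c := le_csSup hbddA ⟨G, hG, rfl⟩
    _ = SJ Gb := hJGb.symm
end

section
/- If Ḡ1, Ḡ2 ∈ 𝒢 both satisfy J(Ḡi) = sup_{G ∈ 𝒢} J(G) (i = 1, 2), then Ḡ1(p) = Ḡ2(p) for every p ∈ [0,1]; that is, the optimal solution of the quantile-formulated insurance problem is unique. -/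
open MeasureTheory Set

lemma integral_eq_indicator (g : ℝ → ℝ) {p : ℝ} (hp : p ∈ Icc (0:ℝ) 1) :
    ∫ t in (0:ℝ)..p, g t = ∫ t in (0:ℝ)..p, (Icc (0:ℝ) 1).indicator g t := by
  apply intervalIntegral.integral_congr
  intro t ht
  rw [uIcc_of_le hp.1, mem_Icc] at ht
  exact (indicator_of_mem (mem_Icc.2 ⟨ht.1, ht.2.trans hp.2⟩) g).symm

lemma ol_congr (σ θ k : ℝ) {q Ψ G Φ : ℝ → ℝ} (hq : EqOn q Ψ (Icc 0 1))
    (hG : EqOn G Φ (Icc 0 1)) : ol σ θ k q G = ol σ θ k Ψ Φ := by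
  have e : uIcc (0:ℝ) 1 = Icc 0 1 := uIcc_of_le zero_le_one
  have h1 : (∫ t in (0:ℝ)..1, G t) = ∫ t in (0:ℝ)..1, Φ t :=
    intervalIntegral.integral_congr (by rw [e]; exact hG)
  have h2 : (∫ t in (0:ℝ)..1, (G t)^2) = ∫ t in (0:ℝ)..1, (Φ t)^2 :=
    intervalIntegral.integral_congr (by rw [e]; exact fun t ht => by simp only [hG ht])
  have h3 : (∫ t in (0:ℝ)..1, q t * G t) = ∫ t in (0:ℝ)..1, Ψ t * Φ t :=
    intervalIntegral.integral_congr (by rw [e]; exact fun t ht => by simp only [hG ht, hq ht])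
  have h4 : (∫ t in (0:ℝ)..1, q t) = ∫ t in (0:ℝ)..1, Ψ t :=
    intervalIntegral.integral_congr (by rw [e]; exact hq)
  unfold ol; rw [h1, h2, h3, h4]

lemma ol_mid (σ θ k : ℝ) (Ψ Φ1 Φ2 : ℝ → ℝ) (h1 : Continuous Φ1) (h2 : Continuous Φ2)
    (hΨ : Continuous Ψ) :
    ol σ θ k Ψ (fun p => (Φ1 p + Φ2 p)/2)
      = (ol σ θ k Ψ Φ1 + ol σ θ k Ψ Φ2)/2
        + (σ/4) * ((∫ t in (0:ℝ)..1, (Φ1 t - Φ2 t)^2)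
            - (∫ t in (0:ℝ)..1, (Φ1 t - Φ2 t))^2) := by
  have i1 := h1.intervalIntegrable (μ := volume) (a := 0) (b := 1)
  have i2 := h2.intervalIntegrable (μ := volume) (a := 0) (b := 1)
  have is1 := (h1.pow 2).intervalIntegrable (μ := volume) (a := 0) (b := 1)
  have is2 := (h2.pow 2).intervalIntegrable (μ := volume) (a := 0) (b := 1)
  have ix := (h1.mul h2).intervalIntegrable (μ := volume) (a := 0) (b := 1)
  have it1 := (hΨ.mul h1).intervalIntegrable (μ := volume) (a := 0) (b := 1)
  have it2 := (hΨ.mul h2).intervalIntegrable (μ := volume) (a := 0) (b := 1)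
  have ha : (∫ t in (0:ℝ)..1, (Φ1 t + Φ2 t)/2)
      = ((∫ t in (0:ℝ)..1, Φ1 t) + ∫ t in (0:ℝ)..1, Φ2 t)/2 := by
    rw [intervalIntegral.integral_div, intervalIntegral.integral_add i1 i2]
  have hb : (∫ t in (0:ℝ)..1, ((Φ1 t + Φ2 t)/2)^2)
      = ((∫ t in (0:ℝ)..1, (Φ1 t)^2) + 2*(∫ t in (0:ℝ)..1, Φ1 t * Φ2 t)
          + ∫ t in (0:ℝ)..1, (Φ2 t)^2)/4 := by
    have e1 : (∫ t in (0:ℝ)..1, ((Φ1 t + Φ2 t)/2)^2)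
        = ∫ t in (0:ℝ)..1, ((Φ1 t)^2 + 2*(Φ1 t * Φ2 t) + (Φ2 t)^2)/4 :=
      intervalIntegral.integral_congr (fun t _ => by ring)
    rw [e1, intervalIntegral.integral_div,
      intervalIntegral.integral_add (f := fun x => Φ1 x ^ 2 + 2 * (Φ1 x * Φ2 x)) (g := fun x => Φ2 x ^ 2) (is1.add (ix.const_mul 2)) is2,
      intervalIntegral.integral_add (f := fun x => Φ1 x ^ 2) (g := fun x => 2 * (Φ1 x * Φ2 x)) is1 (ix.const_mul 2),
      intervalIntegral.integral_const_mul]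
  have hc : (∫ t in (0:ℝ)..1, Ψ t * ((Φ1 t + Φ2 t)/2))
      = ((∫ t in (0:ℝ)..1, Ψ t * Φ1 t) + ∫ t in (0:ℝ)..1, Ψ t * Φ2 t)/2 := by
    have e1 : (∫ t in (0:ℝ)..1, Ψ t * ((Φ1 t + Φ2 t)/2))
        = ∫ t in (0:ℝ)..1, (Ψ t * Φ1 t + Ψ t * Φ2 t)/2 :=
      intervalIntegral.integral_congr (fun t _ => by ring)
    rw [e1, intervalIntegral.integral_div, intervalIntegral.integral_add (f := fun x => Ψ x * Φ1 x) (g := fun x => Ψ x * Φ2 x) it1 it2]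
  have hd : (∫ t in (0:ℝ)..1, (Φ1 t - Φ2 t)^2)
      = (∫ t in (0:ℝ)..1, (Φ1 t)^2) - 2*(∫ t in (0:ℝ)..1, Φ1 t * Φ2 t)
          + ∫ t in (0:ℝ)..1, (Φ2 t)^2 := by
    have e1 : (∫ t in (0:ℝ)..1, (Φ1 t - Φ2 t)^2)
        = ∫ t in (0:ℝ)..1, ((Φ1 t)^2 - 2*(Φ1 t * Φ2 t) + (Φ2 t)^2) :=
      intervalIntegral.integral_congr (fun t _ => by ring)
    rw [e1, intervalIntegral.integral_add (f := fun x => Φ1 x ^ 2 - 2 * (Φ1 x * Φ2 x)) (g := fun x => Φ2 x ^ 2) (is1.sub (ix.const_mul 2)) is2,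
      intervalIntegral.integral_sub (f := fun x => Φ1 x ^ 2) (g := fun x => 2 * (Φ1 x * Φ2 x)) is1 (ix.const_mul 2),
      intervalIntegral.integral_const_mul]
  have he : (∫ t in (0:ℝ)..1, (Φ1 t - Φ2 t))
      = (∫ t in (0:ℝ)..1, Φ1 t) - ∫ t in (0:ℝ)..1, Φ2 t :=
    intervalIntegral.integral_sub i1 i2
  simp only [ol]
  rw [ha, hb, hc, hd, he]
  ring

lemma var_pos (Φ : ℝ → ℝ) (hc : Continuous Φ) (h0 : Φ 0 = 0) (p₀ : ℝ)
    (hp₀ : p₀ ∈ Icc (0:ℝ) 1) (hne : Φ p₀ ≠ 0) :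
    0 < (∫ t in (0:ℝ)..1, (Φ t)^2) - (∫ t in (0:ℝ)..1, Φ t)^2 := by
  set c : ℝ := ∫ t in (0:ℝ)..1, Φ t with hcdef
  have is := (hc.pow 2).intervalIntegrable (μ := volume) (a := 0) (b := 1)
  have i1 := hc.intervalIntegrable (μ := volume) (a := 0) (b := 1)
  have iE : IntervalIntegrable (fun t => (Φ t - c)^2) volume 0 1 :=
    ((hc.sub continuous_const).pow 2).intervalIntegrable 0 1
  have hE : (∫ t in (0:ℝ)..1, (Φ t - c)^2) = (∫ t in (0:ℝ)..1, (Φ t)^2) - c^2 := by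
    have e1 : (∫ t in (0:ℝ)..1, (Φ t - c)^2)
        = ∫ t in (0:ℝ)..1, ((Φ t)^2 - (2*c)*(Φ t) + c^2) :=
      intervalIntegral.integral_congr (fun t _ => by ring)
    rw [e1, intervalIntegral.integral_add (f := fun t => Φ t ^ 2 - 2 * c * Φ t) (g := fun _ => c ^ 2) (is.sub (i1.const_mul (2*c)))
        (intervalIntegrable_const),
      intervalIntegral.integral_sub (f := fun t => Φ t ^ 2) (g := fun t => 2 * c * Φ t) is (i1.const_mul (2*c)),
      intervalIntegral.integral_const_mul, intervalIntegral.integral_const]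
    simp only [smul_eq_mul, ← hcdef]
    ring
  have hnn : (0:ℝ) ≤ ∫ t in (0:ℝ)..1, (Φ t - c)^2 :=
    intervalIntegral.integral_nonneg zero_le_one (fun t _ => sq_nonneg _)
  rcases hnn.lt_or_eq with hlt | heq0
  · rw [← hE]; exact hlt
  · exfalso
    have hzero : (fun t => (Φ t - c)^2) =ᵐ[volume.restrict (Ioc (0:ℝ) 1)] 0 := by
      rw [← intervalIntegral.integral_eq_zero_iff_of_le_of_nonneg_ae zero_le_one
        (Filter.Eventually.of_forall (fun t => sq_nonneg _)) iE]
      exact heq0.symm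
    have hopen : IsOpen {t : ℝ | (Φ t - c)^2 ≠ 0} :=
      isOpen_ne_fun ((hc.sub continuous_const).pow 2) continuous_const
    have hnull : volume ({t : ℝ | (Φ t - c)^2 ≠ 0} ∩ Ioc 0 1) = 0 := by
      have h2 := hzero
      rw [Filter.EventuallyEq] at h2
      simp only [Pi.zero_apply] at h2
      rw [ae_iff, Measure.restrict_apply₀] at h2
      · convert h2 using 2
      · exact hopen.measurableSet.nullMeasurableSet
    have hV : ({t : ℝ | (Φ t - c)^2 ≠ 0} ∩ Ioo 0 1) = ∅ := by
      by_contra hne'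
      have hVopen : IsOpen ({t : ℝ | (Φ t - c)^2 ≠ 0} ∩ Ioo 0 1) := hopen.inter isOpen_Ioo
      have := hVopen.measure_pos volume (nonempty_iff_ne_empty.2 hne')
      have hle : volume ({t : ℝ | (Φ t - c)^2 ≠ 0} ∩ Ioo 0 1) = 0 :=
        measure_mono_null (inter_subset_inter_right _ Ioo_subset_Ioc_self) hnull
      exact this.ne' hle
    have hEq : EqOn Φ (fun _ => c) (Icc 0 1) := by
      have hIoo : EqOn Φ (fun _ => c) (Ioo 0 1) := by
        intro t ht
        by_contra hne''
        have hmem : t ∈ ({t : ℝ | (Φ t - c)^2 ≠ 0} ∩ Ioo 0 1) :=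
          ⟨pow_ne_zero _ (sub_ne_zero.2 hne''), ht⟩
        rw [hV] at hmem
        exact hmem
      have := hIoo.closure hc continuous_const
      rwa [closure_Ioo (zero_ne_one)] at this
    have hc0 : c = 0 := by have := hEq ⟨le_refl 0, zero_le_one⟩; rw [h0] at this; exact this.symm
    exact hne (by rw [hEq hp₀, hc0])

theorem stmt_5 (σ θ k : ℝ) (hσ : 0 < σ) (hθ : 0 ≤ θ)
    (q h : ℝ → ℝ)
    (hh_int : IntegrableOn h (Icc (0:ℝ) 1))
    (hh_nonneg : ∀ᵐ t ∂(volume.restrict (Icc (0:ℝ) 1)), 0 ≤ h t)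
    (hq : ∀ p ∈ Icc (0:ℝ) 1, q p = ∫ t in (0:ℝ)..p, h t)
    (m₀ : ℝ) (hm₀ : m₀ ∈ Ico (0:ℝ) 1)
    (hq0 : ∀ p ∈ Icc (0:ℝ) m₀, q p = 0)
    (hhpos : ∀ᵐ t ∂(volume.restrict (Ioo m₀ 1)), 0 < h t)
    (u : ℝ → ℝ) (hu_conc : ConcaveOn ℝ univ u) (hu_mono : StrictMono u)
    (hu_diff : Differentiable ℝ u)
    (μ : Measure ℝ) [IsProbabilityMeasure μ] (hμ0 : μ {0} = 0)
    (hμsupp : μ (Icc (0:ℝ) 1)ᶜ = 0)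
    (Gbar1 Gbar2 : ℝ → ℝ) (hGb1 : InG h Gbar1) (hGb2 : InG h Gbar2)
    (hopt1 : ∀ G : ℝ → ℝ, InG h G → J σ θ k q u μ G ≤ J σ θ k q u μ Gbar1)
    (hopt2 : ∀ G : ℝ → ℝ, InG h G → J σ θ k q u μ G ≤ J σ θ k q u μ Gbar2) :
    ∀ p ∈ Icc (0:ℝ) 1, Gbar1 p = Gbar2 p := by
  by_contra hcon
  push_neg at hcon
  obtain ⟨p₀, hp₀, hne⟩ := hcon
  obtain ⟨g1, hg1m, hg1b, hg1⟩ := hGb1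
  obtain ⟨g2, hg2m, hg2b, hg2⟩ := hGb2
  have hint1 : IntegrableOn g1 (Icc (0:ℝ) 1) :=
    hh_int.mono' hg1m.aestronglyMeasurable.restrict
      (hg1b.mono fun t ht => by rw [Real.norm_eq_abs, abs_of_nonneg ht.1]; exact ht.2)
  have hint2 : IntegrableOn g2 (Icc (0:ℝ) 1) :=
    hh_int.mono' hg2m.aestronglyMeasurable.restrict
      (hg2b.mono fun t ht => by rw [Real.norm_eq_abs, abs_of_nonneg ht.1]; exact ht.2)
  have hgI1 : Integrable ((Icc (0:ℝ) 1).indicator g1) :=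
    hint1.integrable_indicator measurableSet_Icc
  have hgI2 : Integrable ((Icc (0:ℝ) 1).indicator g2) :=
    hint2.integrable_indicator measurableSet_Icc
  have hhI : Integrable ((Icc (0:ℝ) 1).indicator h) :=
    hh_int.integrable_indicator measurableSet_Icc
  set Φ1 : ℝ → ℝ := fun p => ∫ t in (0:ℝ)..p, (Icc (0:ℝ) 1).indicator g1 t with hΦ1def
  set Φ2 : ℝ → ℝ := fun p => ∫ t in (0:ℝ)..p, (Icc (0:ℝ) 1).indicator g2 t with hΦ2def
  set Ψ : ℝ → ℝ := fun p => ∫ t in (0:ℝ)..p, (Icc (0:ℝ) 1).indicator h t with hΨdef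
  have hΦ1c : Continuous Φ1 := hgI1.continuous_primitive 0
  have hΦ2c : Continuous Φ2 := hgI2.continuous_primitive 0
  have hΨc : Continuous Ψ := hhI.continuous_primitive 0
  have hΦ1e : ∀ p ∈ Icc (0:ℝ) 1, Gbar1 p = Φ1 p :=
    fun p hp => (hg1 p hp).trans (integral_eq_indicator g1 hp)
  have hΦ2e : ∀ p ∈ Icc (0:ℝ) 1, Gbar2 p = Φ2 p :=
    fun p hp => (hg2 p hp).trans (integral_eq_indicator g2 hp)
  have hΨe : EqOn q Ψ (Icc (0:ℝ) 1) :=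
    fun p hp => (hq p hp).trans (integral_eq_indicator h hp)
  have hΦ10 : Φ1 0 = 0 := intervalIntegral.integral_same
  have hΦ20 : Φ2 0 = 0 := intervalIntegral.integral_same
  set Φm : ℝ → ℝ := fun p => (Φ1 p + Φ2 p)/2 with hΦmdef
  have hΦmc : Continuous Φm := (hΦ1c.add hΦ2c).div_const 2
  -- the midpoint is admissible
  have hGmInG : InG h Φm := by
    refine ⟨fun t => (g1 t + g2 t)/2, (hg1m.add hg2m).div_const 2, ?_, ?_⟩
    · filter_upwards [hg1b, hg2b] with t h1 h2
      exact ⟨div_nonneg (add_nonneg h1.1 h2.1) (by norm_num), by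
        rw [div_le_iff₀ (by norm_num : (0:ℝ) < 2)]; linarith [h1.2, h2.2]⟩
    · intro p hp
      have e1 : (∫ t in (0:ℝ)..p, (g1 t + g2 t)/2)
          = ∫ t in (0:ℝ)..p, (Icc (0:ℝ) 1).indicator (fun t => (g1 t + g2 t)/2) t :=
        integral_eq_indicator _ hp
      have e2 : (Icc (0:ℝ) 1).indicator (fun t => (g1 t + g2 t)/2)
          = fun t => ((Icc (0:ℝ) 1).indicator g1 t + (Icc (0:ℝ) 1).indicator g2 t)/2 := by
        funext t
        by_cases ht : t ∈ Icc (0:ℝ) 1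
        · simp [indicator_of_mem ht]
        · simp [indicator_of_notMem ht]
      rw [e1, e2, intervalIntegral.integral_div,
        intervalIntegral.integral_add hgI1.intervalIntegrable
          hgI2.intervalIntegrable]
  -- rewrite the three objectives
  have h1p : ∀ p ∈ Icc (0:ℝ) 1, (1 - p) ∈ Icc (0:ℝ) 1 := by
    intro p hp; rw [mem_Icc] at hp ⊢; constructor <;> linarith [hp.1, hp.2]
  have hG1Φ : EqOn Gbar1 Φ1 (Icc (0:ℝ) 1) := fun p hp => hΦ1e p hp
  have hG2Φ : EqOn Gbar2 Φ2 (Icc (0:ℝ) 1) := fun p hp => hΦ2e p hp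
  have hJ1 : J σ θ k q u μ Gbar1
      = ∫ p in Icc (0:ℝ) 1, u (ol σ θ k Ψ Φ1 - Φ1 (1 - p)) ∂μ := by
    unfold J
    refine setIntegral_congr_fun measurableSet_Icc fun p hp => ?_
    rw [ol_congr σ θ k hΨe hG1Φ, hΦ1e _ (h1p p hp)]
  have hJ2 : J σ θ k q u μ Gbar2
      = ∫ p in Icc (0:ℝ) 1, u (ol σ θ k Ψ Φ2 - Φ2 (1 - p)) ∂μ := by
    unfold J
    refine setIntegral_congr_fun measurableSet_Icc fun p hp => ?_
    rw [ol_congr σ θ k hΨe hG2Φ, hΦ2e _ (h1p p hp)]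
  have hJm : J σ θ k q u μ Φm
      = ∫ p in Icc (0:ℝ) 1, u (ol σ θ k Ψ Φm - Φm (1 - p)) ∂μ := by
    unfold J
    refine setIntegral_congr_fun measurableSet_Icc fun p hp => ?_
    rw [ol_congr σ θ k hΨe (fun x _ => rfl)]
  -- the gap δ
  set δ : ℝ := (σ/4) * ((∫ t in (0:ℝ)..1, (Φ1 t - Φ2 t)^2)
      - (∫ t in (0:ℝ)..1, (Φ1 t - Φ2 t))^2) with hδdef
  have hcm : ol σ θ k Ψ Φm = (ol σ θ k Ψ Φ1 + ol σ θ k Ψ Φ2)/2 + δ :=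
    ol_mid σ θ k Ψ Φ1 Φ2 hΦ1c hΦ2c hΨc
  have hδpos : 0 < δ := by
    have h12 : Φ1 p₀ - Φ2 p₀ ≠ 0 := by
      rw [← hΦ1e _ hp₀, ← hΦ2e _ hp₀]; exact sub_ne_zero.2 hne
    have hv := var_pos (fun t => Φ1 t - Φ2 t) (hΦ1c.sub hΦ2c)
      (by simp [hΦ10, hΦ20]) p₀ hp₀ h12
    rw [hδdef]
    exact mul_pos (by positivity) hv
  -- pointwise strict improvement
  have hptw : ∀ p : ℝ,
      (u (ol σ θ k Ψ Φ1 - Φ1 (1 - p)) + u (ol σ θ k Ψ Φ2 - Φ2 (1 - p)))/2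
        < u (ol σ θ k Ψ Φm - Φm (1 - p)) := by
    intro p
    have hmid : ol σ θ k Ψ Φm - Φm (1 - p)
        = ((ol σ θ k Ψ Φ1 - Φ1 (1 - p)) + (ol σ θ k Ψ Φ2 - Φ2 (1 - p)))/2 + δ := by
      rw [hcm, hΦmdef]; ring
    have h1 := hu_mono (show ((ol σ θ k Ψ Φ1 - Φ1 (1 - p)) + (ol σ θ k Ψ Φ2 - Φ2 (1 - p)))/2
        < ((ol σ θ k Ψ Φ1 - Φ1 (1 - p)) + (ol σ θ k Ψ Φ2 - Φ2 (1 - p)))/2 + δ by linarith)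
    have h2 := hu_conc.2 (mem_univ (ol σ θ k Ψ Φ1 - Φ1 (1 - p)))
      (mem_univ (ol σ θ k Ψ Φ2 - Φ2 (1 - p)))
      (by norm_num : (0:ℝ) ≤ 1/2) (by norm_num : (0:ℝ) ≤ 1/2) (by norm_num)
    simp only [smul_eq_mul] at h2
    have e : (1/2:ℝ) * (ol σ θ k Ψ Φ1 - Φ1 (1 - p)) + (1/2:ℝ) * (ol σ θ k Ψ Φ2 - Φ2 (1 - p))
        = ((ol σ θ k Ψ Φ1 - Φ1 (1 - p)) + (ol σ θ k Ψ Φ2 - Φ2 (1 - p)))/2 := by ring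
    rw [e] at h2
    rw [hmid]
    linarith
  -- integrability of the three integrands
  have instFMC : IsFiniteMeasureOnCompacts μ := ⟨fun K _ => measure_lt_top μ K⟩
  have hF1c : Continuous (fun p => u (ol σ θ k Ψ Φ1 - Φ1 (1 - p))) :=
    hu_diff.continuous.comp
      (continuous_const.sub (hΦ1c.comp (continuous_const.sub continuous_id)))
  have hF2c : Continuous (fun p => u (ol σ θ k Ψ Φ2 - Φ2 (1 - p))) :=
    hu_diff.continuous.comp
      (continuous_const.sub (hΦ2c.comp (continuous_const.sub continuous_id)))
  have hFmc : Continuous (fun p => u (ol σ θ k Ψ Φm - Φm (1 - p))) :=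
    hu_diff.continuous.comp
      (continuous_const.sub (hΦmc.comp (continuous_const.sub continuous_id)))
  have hi1 : IntegrableOn (fun p => u (ol σ θ k Ψ Φ1 - Φ1 (1 - p))) (Icc (0:ℝ) 1) μ :=
    hF1c.continuousOn.integrableOn_compact isCompact_Icc
  have hi2 : IntegrableOn (fun p => u (ol σ θ k Ψ Φ2 - Φ2 (1 - p))) (Icc (0:ℝ) 1) μ :=
    hF2c.continuousOn.integrableOn_compact isCompact_Icc
  have him : IntegrableOn (fun p => u (ol σ θ k Ψ Φm - Φm (1 - p))) (Icc (0:ℝ) 1) μ :=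
    hFmc.continuousOn.integrableOn_compact isCompact_Icc
  -- the measure of [0,1] is 1
  have hμIcc : μ (Icc (0:ℝ) 1) = 1 := by
    have h' := measure_add_measure_compl (μ := μ) (measurableSet_Icc (a := (0:ℝ)) (b := 1))
    rw [hμsupp, add_zero, measure_univ] at h'
    exact h'
  -- strict integral inequality
  have hD : (0:ℝ) < ∫ p in Icc (0:ℝ) 1,
      (u (ol σ θ k Ψ Φm - Φm (1 - p))
        - (u (ol σ θ k Ψ Φ1 - Φ1 (1 - p)) + u (ol σ θ k Ψ Φ2 - Φ2 (1 - p)))/2) ∂μ := by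
    refine (setIntegral_pos_iff_support_of_nonneg_ae ?_ ?_).2 ?_
    · exact Filter.Eventually.of_forall fun p => by have := hptw p; simp only [Pi.zero_apply]; linarith
    · exact him.sub ((hi1.add hi2).div_const 2)
    · have hsub : Icc (0:ℝ) 1 ⊆ Function.support (fun p =>
          u (ol σ θ k Ψ Φm - Φm (1 - p))
            - (u (ol σ θ k Ψ Φ1 - Φ1 (1 - p)) + u (ol σ θ k Ψ Φ2 - Φ2 (1 - p)))/2) :=
        fun p _ => ne_of_gt (by have := hptw p; dsimp only; linarith)
      rw [inter_eq_right.mpr hsub, hμIcc]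
      exact zero_lt_one
  have hsplit : (∫ p in Icc (0:ℝ) 1,
      (u (ol σ θ k Ψ Φm - Φm (1 - p))
        - (u (ol σ θ k Ψ Φ1 - Φ1 (1 - p)) + u (ol σ θ k Ψ Φ2 - Φ2 (1 - p)))/2) ∂μ)
      = (∫ p in Icc (0:ℝ) 1, u (ol σ θ k Ψ Φm - Φm (1 - p)) ∂μ)
        - ((∫ p in Icc (0:ℝ) 1, u (ol σ θ k Ψ Φ1 - Φ1 (1 - p)) ∂μ)
            + ∫ p in Icc (0:ℝ) 1, u (ol σ θ k Ψ Φ2 - Φ2 (1 - p)) ∂μ)/2 := by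
    have hi12 : IntegrableOn (fun p =>
        (u (ol σ θ k Ψ Φ1 - Φ1 (1 - p)) + u (ol σ θ k Ψ Φ2 - Φ2 (1 - p)))/2)
        (Icc (0:ℝ) 1) μ := (hi1.add hi2).div_const 2
    rw [integral_sub him hi12, integral_div, integral_add hi1 hi2]
  -- conclude
  have heq12 : J σ θ k q u μ Gbar2 = J σ θ k q u μ Gbar1 :=
    le_antisymm (hopt1 _ ⟨g2, hg2m, hg2b, hg2⟩) (hopt2 _ ⟨g1, hg1m, hg1b, hg1⟩)
  have hle := hopt1 Φm hGmInG
  rw [hJm, hJ1] at hle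
  rw [hsplit] at hD
  rw [hJ2, hJ1] at heq12
  linarith
end

section
/- Let Ḡ ∈ 𝒢. Then J(Ḡ) = sup_{G ∈ 𝒢} J(G) if and only if for every G ∈ 𝒢 the following variational inequality holds: ∫_{[0,1]} [ ∫₀¹ ( 2σ∫₀¹ Ḡ(s)ds − 2σḠ(t) + 2σq(t) + θ − 2σ∫₀¹ q(s)ds )·(G(t) − Ḡ(t)) dt − (G(1−p) − Ḡ(1−p)) ] · u'( ol(Ḡ) − Ḡ(1−p) ) μ(dp) ≤ 0. -/
open MeasureTheory Set intervalIntegral Filter Topology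

section aux

lemma tangent_le {u : ℝ → ℝ} (hc : ConcaveOn ℝ univ u) (hd : Differentiable ℝ u) (x y : ℝ) :
    u x ≤ u y + deriv u y * (x - y) := by
  rcases lt_trichotomy x y with hxy | rfl | hxy
  · have h := hc.deriv_le_slope (mem_univ x) (mem_univ y) hxy (hd y)
    rw [slope_def_field, le_div_iff₀ (by linarith : (0:ℝ) < y - x)] at h
    nlinarith
  · simp
  · have h := hc.slope_le_deriv (mem_univ y) (mem_univ x) hxy (hd y)
    rw [slope_def_field, div_le_iff₀ (by linarith : (0:ℝ) < x - y)] at h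
    nlinarith

lemma deriv_nn {u : ℝ → ℝ} (hc : ConcaveOn ℝ univ u) (hm : StrictMono u)
    (hd : Differentiable ℝ u) (y : ℝ) : 0 ≤ deriv u y := by
  have h := hc.slope_le_deriv (mem_univ y) (mem_univ (y+1)) (by linarith) (hd y)
  rw [slope_def_field] at h
  have : u y ≤ u (y+1) := (hm.monotone (by linarith))
  have h1 : (0:ℝ) ≤ (u (y+1) - u y) / (y + 1 - y) := by
    apply div_nonneg <;> linarith
  linarith

lemma deriv_anti {u : ℝ → ℝ} (hc : ConcaveOn ℝ univ u) (hd : Differentiable ℝ u) :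
    Antitone (deriv u) := by
  have := hc.antitoneOn_deriv (fun x _ => hd x)
  rwa [antitoneOn_univ] at this

lemma lip_bound {u : ℝ → ℝ} (hc : ConcaveOn ℝ univ u) (hm : StrictMono u)
    (hd : Differentiable ℝ u) {R a b : ℝ} (ha : -R ≤ a) (hb : -R ≤ b) :
    |u a - u b| ≤ deriv u (-R) * |a - b| := by
  have key : ∀ s t : ℝ, -R ≤ s → s ≤ t → u t - u s ≤ deriv u (-R) * (t - s) := by
    intro s t hs hst
    have h1 := tangent_le hc hd t s
    have h2 : deriv u s ≤ deriv u (-R) := deriv_anti hc hd hs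
    nlinarith [deriv_nn hc hm hd s]
  rcases le_total a b with hab | hab
  · rw [abs_of_nonpos (by linarith [hm.monotone hab] : u a - u b ≤ 0),
      abs_of_nonpos (by linarith : a - b ≤ 0)]
    have := key a b ha hab; linarith
  · rw [abs_of_nonneg (by linarith [hm.monotone hab] : 0 ≤ u a - u b),
      abs_of_nonneg (by linarith : 0 ≤ a - b)]
    exact key b a hb hab

lemma contOn_primitive {g G : ℝ → ℝ} (hg : IntegrableOn g (Icc (0:ℝ) 1))
    (hG : ∀ p ∈ Icc (0:ℝ) 1, G p = ∫ t in (0:ℝ)..p, g t) :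
    ContinuousOn G (Icc (0:ℝ) 1) := by
  have hind : Integrable ((Icc (0:ℝ) 1).indicator g) :=
    (integrable_indicator_iff measurableSet_Icc).2 hg
  have hcont : Continuous fun x => ∫ t in (0:ℝ)..x, (Icc (0:ℝ) 1).indicator g t :=
    hind.continuous_primitive 0
  apply hcont.continuousOn.congr
  intro p hp
  rw [hG p hp]
  apply intervalIntegral.integral_congr
  intro x hx
  rw [uIcc_of_le hp.1] at hx
  exact (indicator_of_mem (Icc_subset_Icc le_rfl hp.2 hx) g).symm

lemma InG.integrableOn_g {h g : ℝ → ℝ} (hh_int : IntegrableOn h (Icc (0:ℝ) 1))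
    (hmeas : Measurable g)
    (hbnd : ∀ᵐ t ∂(volume.restrict (Icc (0:ℝ) 1)), 0 ≤ g t ∧ g t ≤ h t) :
    IntegrableOn g (Icc (0:ℝ) 1) := by
  apply Integrable.mono' hh_int hmeas.aestronglyMeasurable.restrict
  filter_upwards [hbnd] with t ht
  rw [Real.norm_eq_abs, abs_of_nonneg ht.1]; exact ht.2

lemma InG.contOn {h G : ℝ → ℝ} (hh_int : IntegrableOn h (Icc (0:ℝ) 1))
    (hG : InG h G) : ContinuousOn G (Icc (0:ℝ) 1) := by
  obtain ⟨g, hm, hb, he⟩ := hG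
  exact contOn_primitive (InG.integrableOn_g hh_int hm hb) he

lemma InG.combo {h Gb G : ℝ → ℝ} (hh_int : IntegrableOn h (Icc (0:ℝ) 1))
    (hGb : InG h Gb) (hG : InG h G) {s : ℝ} (hs0 : 0 ≤ s) (hs1 : s ≤ 1) :
    InG h (fun p => Gb p + s * (G p - Gb p)) := by
  obtain ⟨gb, hmb, hbb, heb⟩ := hGb
  obtain ⟨g, hm, hb, he⟩ := hG
  refine ⟨fun t => gb t + s * (g t - gb t), by fun_prop, ?_, ?_⟩
  · filter_upwards [hbb, hb] with t ⟨h1, h2⟩ ⟨h3, h4⟩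
    constructor <;> nlinarith
  · intro p hp
    have hib : IntervalIntegrable gb volume 0 p := by
      apply IntegrableOn.intervalIntegrable
      rw [uIcc_of_le hp.1]
      exact (InG.integrableOn_g hh_int hmb hbb).mono_set (Icc_subset_Icc le_rfl hp.2)
    have hig : IntervalIntegrable g volume 0 p := by
      apply IntegrableOn.intervalIntegrable
      rw [uIcc_of_le hp.1]
      exact (InG.integrableOn_g hh_int hm hb).mono_set (Icc_subset_Icc le_rfl hp.2)
    simp only []
    rw [heb p hp, he p hp,
      intervalIntegral.integral_add hib ((hig.sub hib).const_mul s),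
      intervalIntegral.integral_const_mul, intervalIntegral.integral_sub hig hib]

lemma ii_of_contOn {f : ℝ → ℝ} (hf : ContinuousOn f (Icc (0:ℝ) 1)) :
    IntervalIntegrable f volume 0 1 := by
  apply ContinuousOn.intervalIntegrable
  rwa [uIcc_of_le zero_le_one]

lemma Bnonpos {σ : ℝ} (hσ : 0 ≤ σ) {D : ℝ → ℝ} (hD : ContinuousOn D (Icc (0:ℝ) 1)) :
    σ * (∫ t in (0:ℝ)..1, D t) ^ 2 - σ * (∫ t in (0:ℝ)..1, (D t) ^ 2) ≤ 0 := by
  set c := ∫ t in (0:ℝ)..1, D t with hc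
  have h0 : 0 ≤ ∫ t in (0:ℝ)..1, (D t - c) ^ 2 :=
    intervalIntegral.integral_nonneg zero_le_one (fun t _ => sq_nonneg _)
  have hD1 := ii_of_contOn hD
  have hD2 : IntervalIntegrable (fun t => D t * D t) volume 0 1 := ii_of_contOn (hD.mul hD)
  have hrw : (fun t => (D t - c) ^ 2) = fun t => D t * D t + ((-2*c) * D t + c^2) := by
    funext t; ring
  have hexp : ∫ t in (0:ℝ)..1, (D t - c) ^ 2
      = (∫ t in (0:ℝ)..1, D t * D t) + ((-2*c) * c + c^2) := by
    rw [hrw, intervalIntegral.integral_add hD2 ((hD1.const_mul _).add intervalIntegrable_const),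
      intervalIntegral.integral_add (hD1.const_mul _) intervalIntegrable_const,
      intervalIntegral.integral_const_mul, intervalIntegral.integral_const]
    simp
    left; rfl
  have hsq : (∫ t in (0:ℝ)..1, (D t)^2) = ∫ t in (0:ℝ)..1, D t * D t := by
    apply intervalIntegral.integral_congr; intro t _; ring
  rw [hexp] at h0
  rw [hsq]
  nlinarith

lemma olExpand (σ θ k : ℝ) {q Gb G : ℝ → ℝ}
    (hq : ContinuousOn q (Icc (0:ℝ) 1)) (hGb : ContinuousOn Gb (Icc (0:ℝ) 1))
    (hG : ContinuousOn G (Icc (0:ℝ) 1)) (s : ℝ) :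
    ol σ θ k q (fun p => Gb p + s * (G p - Gb p))
      = ol σ θ k q Gb
        + s * (∫ t in (0:ℝ)..1,
            (2 * σ * (∫ r in (0:ℝ)..1, Gb r) - 2 * σ * Gb t + 2 * σ * q t + θ
              - 2 * σ * (∫ r in (0:ℝ)..1, q r)) * (G t - Gb t))
        + s^2 * (σ * (∫ t in (0:ℝ)..1, (G t - Gb t)) ^ 2
            - σ * (∫ t in (0:ℝ)..1, (G t - Gb t) ^ 2)) := by
  have hD : ContinuousOn (fun t => G t - Gb t) (Icc (0:ℝ) 1) := hG.sub hGb
  have iGb := ii_of_contOn hGb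
  have iD := ii_of_contOn hD
  have iGb2 : IntervalIntegrable (fun t => Gb t * Gb t) volume 0 1 := ii_of_contOn (hGb.mul hGb)
  have iGbD : IntervalIntegrable (fun t => Gb t * (G t - Gb t)) volume 0 1 :=
    ii_of_contOn (hGb.mul hD)
  have iD2 : IntervalIntegrable (fun t => (G t - Gb t) * (G t - Gb t)) volume 0 1 :=
    ii_of_contOn (hD.mul hD)
  have iqGb : IntervalIntegrable (fun t => q t * Gb t) volume 0 1 := ii_of_contOn (hq.mul hGb)
  have iqD : IntervalIntegrable (fun t => q t * (G t - Gb t)) volume 0 1 :=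
    ii_of_contOn (hq.mul hD)
  have h1 : (∫ t in (0:ℝ)..1, (Gb t + s * (G t - Gb t)))
      = (∫ t in (0:ℝ)..1, Gb t) + s * ∫ t in (0:ℝ)..1, (G t - Gb t) := by
    rw [intervalIntegral.integral_add iGb (iD.const_mul s),
      intervalIntegral.integral_const_mul]
  have h2 : (∫ t in (0:ℝ)..1, (Gb t + s * (G t - Gb t)) ^ 2)
      = (∫ t in (0:ℝ)..1, Gb t * Gb t)
        + (s * (2 * ∫ t in (0:ℝ)..1, Gb t * (G t - Gb t))
           + s^2 * ∫ t in (0:ℝ)..1, (G t - Gb t) * (G t - Gb t)) := by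
    have hrw : (fun t => (Gb t + s * (G t - Gb t)) ^ 2)
        = fun t => Gb t * Gb t + (s * (2 * (Gb t * (G t - Gb t)))
            + s^2 * ((G t - Gb t) * (G t - Gb t))) := by funext t; ring
    rw [hrw, intervalIntegral.integral_add iGb2
        (((iGbD.const_mul 2).const_mul s).add ((iD2).const_mul (s^2))),
      intervalIntegral.integral_add ((iGbD.const_mul 2).const_mul s) (iD2.const_mul (s^2)),
      intervalIntegral.integral_const_mul, intervalIntegral.integral_const_mul,
      intervalIntegral.integral_const_mul]
  have h3 : (∫ t in (0:ℝ)..1, q t * (Gb t + s * (G t - Gb t)))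
      = (∫ t in (0:ℝ)..1, q t * Gb t) + s * ∫ t in (0:ℝ)..1, q t * (G t - Gb t) := by
    have hrw : (fun t => q t * (Gb t + s * (G t - Gb t)))
        = fun t => q t * Gb t + s * (q t * (G t - Gb t)) := by funext t; ring
    rw [hrw, intervalIntegral.integral_add iqGb (iqD.const_mul s),
      intervalIntegral.integral_const_mul]
  have h4 : (∫ t in (0:ℝ)..1,
        (2 * σ * (∫ r in (0:ℝ)..1, Gb r) - 2 * σ * Gb t + 2 * σ * q t + θ
          - 2 * σ * (∫ r in (0:ℝ)..1, q r)) * (G t - Gb t))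
      = (2*σ*(∫ r in (0:ℝ)..1, Gb r) + θ - 2*σ*(∫ r in (0:ℝ)..1, q r))
          * (∫ t in (0:ℝ)..1, (G t - Gb t))
        + ((-(2*σ)) * (∫ t in (0:ℝ)..1, Gb t * (G t - Gb t))
          + (2*σ) * ∫ t in (0:ℝ)..1, q t * (G t - Gb t)) := by
    have hrw : (fun t => (2 * σ * (∫ r in (0:ℝ)..1, Gb r) - 2 * σ * Gb t + 2 * σ * q t + θ
          - 2 * σ * (∫ r in (0:ℝ)..1, q r)) * (G t - Gb t))
        = fun t => (2*σ*(∫ r in (0:ℝ)..1, Gb r) + θ - 2*σ*(∫ r in (0:ℝ)..1, q r))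
            * (G t - Gb t)
          + ((-(2*σ)) * (Gb t * (G t - Gb t)) + (2*σ) * (q t * (G t - Gb t))) := by
      funext t; ring
    rw [hrw, intervalIntegral.integral_add (iD.const_mul _)
        ((iGbD.const_mul _).add (iqD.const_mul _)),
      intervalIntegral.integral_add (iGbD.const_mul _) (iqD.const_mul _),
      intervalIntegral.integral_const_mul, intervalIntegral.integral_const_mul,
      intervalIntegral.integral_const_mul]
  have hsqGb : (∫ t in (0:ℝ)..1, (Gb t)^2) = ∫ t in (0:ℝ)..1, Gb t * Gb t := by
    apply intervalIntegral.integral_congr; intro t _; ring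
  have hsqD : (∫ t in (0:ℝ)..1, (G t - Gb t)^2)
      = ∫ t in (0:ℝ)..1, (G t - Gb t) * (G t - Gb t) := by
    apply intervalIntegral.integral_congr; intro t _; ring
  simp only [ol]
  rw [h1, h2, h3, h4, hsqGb, hsqD]
  ring

end aux
set_option maxHeartbeats 1000000 in
theorem stmt_6 (σ θ k : ℝ) (hσ : 0 < σ) (hθ : 0 ≤ θ)
    (q h : ℝ → ℝ)
    (hh_int : IntegrableOn h (Icc (0:ℝ) 1))
    (hh_nonneg : ∀ᵐ t ∂(volume.restrict (Icc (0:ℝ) 1)), 0 ≤ h t)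
    (hq : ∀ p ∈ Icc (0:ℝ) 1, q p = ∫ t in (0:ℝ)..p, h t)
    (m₀ : ℝ) (hm₀ : m₀ ∈ Ico (0:ℝ) 1)
    (hq0 : ∀ p ∈ Icc (0:ℝ) m₀, q p = 0)
    (hhpos : ∀ᵐ t ∂(volume.restrict (Ioo m₀ 1)), 0 < h t)
    (u : ℝ → ℝ) (hu_conc : ConcaveOn ℝ univ u) (hu_mono : StrictMono u)
    (hu_diff : Differentiable ℝ u)
    (μ : Measure ℝ) [IsProbabilityMeasure μ] (hμ0 : μ {0} = 0)
    (hμsupp : μ (Icc (0:ℝ) 1)ᶜ = 0)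
    (Gbar : ℝ → ℝ) (hGbar : InG h Gbar) :
    (∀ G : ℝ → ℝ, InG h G → J σ θ k q u μ G ≤ J σ θ k q u μ Gbar) ↔
      ∀ G : ℝ → ℝ, InG h G →
        (∫ p in Icc (0:ℝ) 1,
          ((∫ t in (0:ℝ)..1,
              (2 * σ * (∫ s in (0:ℝ)..1, Gbar s) - 2 * σ * Gbar t + 2 * σ * q t
                + θ - 2 * σ * (∫ s in (0:ℝ)..1, q s)) * (G t - Gbar t))
            - (G (1 - p) - Gbar (1 - p)))
          * deriv u (ol σ θ k q Gbar - Gbar (1 - p)) ∂μ) ≤ 0 := by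
  have hqC : ContinuousOn q (Icc (0:ℝ) 1) := contOn_primitive hh_int hq
  have hGbC : ContinuousOn Gbar (Icc (0:ℝ) 1) := InG.contOn hh_int hGbar
  have hmaps : MapsTo (fun p : ℝ => 1 - p) (Icc (0:ℝ) 1) (Icc (0:ℝ) 1) := by
    intro p hp; simp only [mem_Icc] at hp ⊢; constructor <;> linarith
  have hcont1p : Continuous (fun p : ℝ => 1 - p) := by continuity
  have hGbopC : ContinuousOn (fun p : ℝ => Gbar (1 - p)) (Icc (0:ℝ) 1) :=
    hGbC.comp hcont1p.continuousOn hmaps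
  set c0 := ol σ θ k q Gbar with hc0
  have hyC : ContinuousOn (fun p : ℝ => c0 - Gbar (1 - p)) (Icc (0:ℝ) 1) :=
    continuousOn_const.sub hGbopC
  obtain ⟨MY, hMY⟩ := isCompact_Icc.exists_bound_of_continuousOn hyC
  have hMY0 : 0 ≤ MY := le_trans (norm_nonneg _) (hMY 0 (by simp))
  have hderiv_meas : Measurable (deriv u) := (deriv_anti hu_conc hu_diff).measurable
  have hK0 : ∀ R : ℝ, 0 ≤ deriv u R := deriv_nn hu_conc hu_mono hu_diff
  constructor
  · -- optimality implies the first-order condition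
    intro hopt G hG
    have hGC : ContinuousOn G (Icc (0:ℝ) 1) := InG.contOn hh_int hG
    have hGopC : ContinuousOn (fun p : ℝ => G (1 - p)) (Icc (0:ℝ) 1) :=
      hGC.comp hcont1p.continuousOn hmaps
    set L := ∫ t in (0:ℝ)..1,
        (2 * σ * (∫ r in (0:ℝ)..1, Gbar r) - 2 * σ * Gbar t + 2 * σ * q t + θ
          - 2 * σ * (∫ r in (0:ℝ)..1, q r)) * (G t - Gbar t) with hL
    set B := σ * (∫ t in (0:ℝ)..1, (G t - Gbar t)) ^ 2
        - σ * (∫ t in (0:ℝ)..1, (G t - Gbar t) ^ 2) with hB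
    have hCcont : ContinuousOn (fun p : ℝ => L - (G (1 - p) - Gbar (1 - p))) (Icc (0:ℝ) 1) :=
      continuousOn_const.sub (hGopC.sub hGbopC)
    obtain ⟨MC, hMC⟩ := isCompact_Icc.exists_bound_of_continuousOn hCcont
    have hMC0 : 0 ≤ MC := le_trans (norm_nonneg _) (hMC 0 (by simp))
    set s : ℕ → ℝ := fun n => 1 / (n + 1) with hs
    have hspos : ∀ n : ℕ, 0 < s n := fun n => by positivity
    have hsle : ∀ n : ℕ, s n ≤ 1 := by
      intro n
      rw [hs]
      simp only
      rw [div_le_one (by positivity)]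
      linarith [Nat.cast_nonneg (α := ℝ) n]
    have holn : ∀ n : ℕ, ol σ θ k q (fun p => Gbar p + s n * (G p - Gbar p))
        = c0 + s n * L + (s n)^2 * B := fun n => olExpand σ θ k hqC hGbC hGC (s n)
    have hJle : ∀ n : ℕ, J σ θ k q u μ (fun p => Gbar p + s n * (G p - Gbar p))
        ≤ J σ θ k q u μ Gbar :=
      fun n => hopt _ (InG.combo hh_int hGbar hG (hspos n).le (hsle n))
    set F : ℕ → ℝ → ℝ := fun n p =>
      (u (c0 + s n * L + (s n)^2 * B - (Gbar (1 - p) + s n * (G (1 - p) - Gbar (1 - p))))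
        - u (c0 - Gbar (1 - p))) / s n with hF
    have hIb : IntegrableOn (fun p => u (c0 - Gbar (1 - p))) (Icc (0:ℝ) 1) μ :=
      ContinuousOn.integrableOn_compact isCompact_Icc
        (hu_diff.continuous.comp_continuousOn hyC)
    have hIa : ∀ n : ℕ, IntegrableOn (fun p => u (c0 + s n * L + (s n)^2 * B
        - (Gbar (1 - p) + s n * (G (1 - p) - Gbar (1 - p))))) (Icc (0:ℝ) 1) μ := fun n =>
      ContinuousOn.integrableOn_compact isCompact_Icc
        (hu_diff.continuous.comp_continuousOn
          (continuousOn_const.sub (hGbopC.add (continuousOn_const.mul (hGopC.sub hGbopC)))))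
    have hFneg : ∀ n : ℕ, (∫ p in Icc (0:ℝ) 1, F n p ∂μ) ≤ 0 := by
      intro n
      have hJn := hJle n
      simp only [J] at hJn
      rw [holn n, ← hc0] at hJn
      have hrwF : (fun p => F n p) = fun p => (s n)⁻¹ *
          (u (c0 + s n * L + (s n)^2 * B
              - (Gbar (1 - p) + s n * (G (1 - p) - Gbar (1 - p))))
            - u (c0 - Gbar (1 - p))) := by
        funext p; rw [hF]; simp only; rw [div_eq_inv_mul]
      rw [hrwF, MeasureTheory.integral_const_mul, integral_sub (hIa n) hIb]
      apply mul_nonpos_of_nonneg_of_nonpos (by positivity)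
      linarith
    have hlim : ∀ p : ℝ, Tendsto (fun n => F n p) atTop
        (𝓝 ((L - (G (1 - p) - Gbar (1 - p))) * deriv u (c0 - Gbar (1 - p)))) := by
      intro p
      set d := G (1 - p) - Gbar (1 - p) with hd
      set gb := Gbar (1 - p) with hgb
      have hin : HasDerivAt (fun t : ℝ => c0 + t * L + t^2 * B - (gb + t * d)) (L - d) 0 := by
        have h1 : HasDerivAt (fun t : ℝ => c0 + t * L + t^2 * B - (gb + t * d))
            (0 + 1 * L + ((2:ℕ) * 0^(2-1)) * B - (0 + 1 * d)) 0 :=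
          (((hasDerivAt_const 0 c0).add ((hasDerivAt_id 0).mul_const L)).add
            ((hasDerivAt_pow 2 0).mul_const B)).sub
            ((hasDerivAt_const 0 gb).add ((hasDerivAt_id 0).mul_const d))
        convert h1 using 1
        norm_num
      have hg : HasDerivAt u (deriv u (c0 - gb))
          ((fun t : ℝ => c0 + t * L + t^2 * B - (gb + t * d)) 0) := by
        simp only
        rw [show c0 + (0:ℝ) * L + (0:ℝ)^2 * B - (gb + (0:ℝ) * d) = c0 - gb by ring]
        exact (hu_diff (c0 - gb)).hasDerivAt
      have hcomp := hg.comp 0 hin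
      have hslope := hasDerivAt_iff_tendsto_slope.mp hcomp
      have hseq : Tendsto s atTop (𝓝[≠] (0:ℝ)) := by
        apply tendsto_nhdsWithin_of_tendsto_nhds_of_eventually_within
        · rw [hs]; exact tendsto_one_div_add_atTop_nhds_zero_nat
        · filter_upwards with n
          exact (hspos n).ne'
      have htd := hslope.comp hseq
      rw [mul_comm]
      apply htd.congr
      intro n
      rw [Function.comp_apply, slope_def_field, Function.comp_apply, Function.comp_apply]
      rw [hF]
      simp only
      norm_num
      rfl
    have hFm : ∀ n : ℕ, AEStronglyMeasurable (F n) (μ.restrict (Icc (0:ℝ) 1)) := by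
      intro n
      apply ContinuousOn.aestronglyMeasurable _ measurableSet_Icc
      apply ContinuousOn.div_const
      exact (hu_diff.continuous.comp_continuousOn
        (continuousOn_const.sub (hGbopC.add
          (continuousOn_const.mul (hGopC.sub hGbopC))))).sub
        (hu_diff.continuous.comp_continuousOn hyC)
    set R := MY + MC + |B| with hR
    have hbound : ∀ n : ℕ, ∀ᵐ p ∂(μ.restrict (Icc (0:ℝ) 1)),
        ‖F n p‖ ≤ deriv u (-R) * (MC + |B|) := by
      intro n
      filter_upwards [ae_restrict_mem measurableSet_Icc] with p hp
      have hy := hMY p hp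
      rw [Real.norm_eq_abs] at hy
      have hCp := hMC p hp
      rw [Real.norm_eq_abs] at hCp
      have hs0 := (hspos n).le
      have hs1 := hsle n
      have habs : |s n * (L - (G (1 - p) - Gbar (1 - p))) + (s n)^2 * B|
          ≤ s n * (MC + |B|) := by
        have e1 := abs_add_le (s n * (L - (G (1 - p) - Gbar (1 - p)))) ((s n)^2 * B)
        rw [abs_mul, abs_mul, abs_of_nonneg hs0, abs_of_nonneg (sq_nonneg (s n))] at e1
        have f1 : s n * |L - (G (1 - p) - Gbar (1 - p))| ≤ s n * MC :=
          mul_le_mul_of_nonneg_left hCp hs0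
        have f2' : (s n)^2 ≤ s n := by nlinarith
        have f2 : (s n)^2 * |B| ≤ s n * |B| :=
          mul_le_mul_of_nonneg_right f2' (abs_nonneg B)
        linarith
      have hyabs := abs_le.mp hy
      have hpertabs := abs_le.mp habs
      have hargR : -R ≤ c0 + s n * L + (s n)^2 * B
          - (Gbar (1 - p) + s n * (G (1 - p) - Gbar (1 - p))) := by
        have : c0 + s n * L + (s n)^2 * B
            - (Gbar (1 - p) + s n * (G (1 - p) - Gbar (1 - p)))
            = (c0 - Gbar (1 - p)) + (s n * (L - (G (1 - p) - Gbar (1 - p))) + (s n)^2 * B) := by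
          ring
        rw [this, hR]
        nlinarith [abs_nonneg B]
      have hyR : -R ≤ c0 - Gbar (1 - p) := by
        rw [hR]; nlinarith [abs_nonneg B]
      have hlip := lip_bound hu_conc hu_mono hu_diff hargR hyR
      rw [hF]
      simp only
      rw [Real.norm_eq_abs, abs_div, abs_of_nonneg hs0, div_le_iff₀ (hspos n)]
      have harg' : (c0 + s n * L + (s n)^2 * B
          - (Gbar (1 - p) + s n * (G (1 - p) - Gbar (1 - p)))) - (c0 - Gbar (1 - p))
          = s n * (L - (G (1 - p) - Gbar (1 - p))) + (s n)^2 * B := by ring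
      rw [harg'] at hlip
      calc |u (c0 + s n * L + (s n)^2 * B
            - (Gbar (1 - p) + s n * (G (1 - p) - Gbar (1 - p)))) - u (c0 - Gbar (1 - p))|
          ≤ deriv u (-R) * |s n * (L - (G (1 - p) - Gbar (1 - p))) + (s n)^2 * B| := hlip
        _ ≤ deriv u (-R) * (s n * (MC + |B|)) :=
            mul_le_mul_of_nonneg_left habs (hK0 _)
        _ = deriv u (-R) * (MC + |B|) * s n := by ring
    have hdct := tendsto_integral_of_dominated_convergence
      (fun _ => deriv u (-R) * (MC + |B|)) hFm (integrable_const _) hbound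
      (Filter.Eventually.of_forall hlim)
    exact le_of_tendsto hdct (Filter.Eventually.of_forall hFneg)
  · -- the first-order condition implies optimality
    intro hFOC G hG
    have hGC : ContinuousOn G (Icc (0:ℝ) 1) := InG.contOn hh_int hG
    have hGopC : ContinuousOn (fun p : ℝ => G (1 - p)) (Icc (0:ℝ) 1) :=
      hGC.comp hcont1p.continuousOn hmaps
    have hfoc := hFOC G hG
    set L := ∫ t in (0:ℝ)..1,
        (2 * σ * (∫ r in (0:ℝ)..1, Gbar r) - 2 * σ * Gbar t + 2 * σ * q t + θ
          - 2 * σ * (∫ r in (0:ℝ)..1, q r)) * (G t - Gbar t) with hL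
    set B := σ * (∫ t in (0:ℝ)..1, (G t - Gbar t)) ^ 2
        - σ * (∫ t in (0:ℝ)..1, (G t - Gbar t) ^ 2) with hB
    have hexp := olExpand σ θ k hqC hGbC hGC 1
    have hfun : (fun p => Gbar p + 1 * (G p - Gbar p)) = G := by funext p; ring
    rw [hfun] at hexp
    have hol1 : ol σ θ k q G = c0 + L + B := by rw [hexp]; ring
    have hBle : B ≤ 0 := Bnonpos hσ.le (hGC.sub hGbC)
    have hpt : ∀ p : ℝ, u (ol σ θ k q G - G (1 - p))
        ≤ u (c0 - Gbar (1 - p))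
          + (L - (G (1 - p) - Gbar (1 - p))) * deriv u (c0 - Gbar (1 - p)) := by
      intro p
      have ht := tangent_le hu_conc hu_diff (ol σ θ k q G - G (1 - p)) (c0 - Gbar (1 - p))
      have hnn := hK0 (c0 - Gbar (1 - p))
      have hdiff : (ol σ θ k q G - G (1 - p)) - (c0 - Gbar (1 - p))
          = (L - (G (1 - p) - Gbar (1 - p))) + B := by rw [hol1]; ring
      rw [hdiff, mul_add] at ht
      nlinarith [mul_nonpos_of_nonneg_of_nonpos hnn hBle]
    have hI1 : IntegrableOn (fun p => u (ol σ θ k q G - G (1 - p))) (Icc (0:ℝ) 1) μ :=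
      ContinuousOn.integrableOn_compact isCompact_Icc
        (hu_diff.continuous.comp_continuousOn (continuousOn_const.sub hGopC))
    have hI2 : IntegrableOn (fun p => u (c0 - Gbar (1 - p))) (Icc (0:ℝ) 1) μ :=
      ContinuousOn.integrableOn_compact isCompact_Icc
        (hu_diff.continuous.comp_continuousOn hyC)
    have hCcont : ContinuousOn (fun p : ℝ => L - (G (1 - p) - Gbar (1 - p))) (Icc (0:ℝ) 1) :=
      continuousOn_const.sub (hGopC.sub hGbopC)
    obtain ⟨MC, hMC⟩ := isCompact_Icc.exists_bound_of_continuousOn hCcont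
    have hdmeasy : AEStronglyMeasurable (fun p : ℝ => deriv u (c0 - Gbar (1 - p)))
        (μ.restrict (Icc (0:ℝ) 1)) :=
      (hderiv_meas.comp_aemeasurable
        (hyC.aemeasurable measurableSet_Icc)).aestronglyMeasurable
    have hI3 : IntegrableOn (fun p => (L - (G (1 - p) - Gbar (1 - p)))
        * deriv u (c0 - Gbar (1 - p))) (Icc (0:ℝ) 1) μ := by
      apply Integrable.mono' (integrable_const (MC * deriv u (-MY)))
      · exact (hCcont.aestronglyMeasurable measurableSet_Icc).mul hdmeasy
      · filter_upwards [ae_restrict_mem measurableSet_Icc] with p hp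
        rw [Real.norm_eq_abs, abs_mul]
        have h1 : |L - (G (1 - p) - Gbar (1 - p))| ≤ MC := by
          have := hMC p hp; rwa [Real.norm_eq_abs] at this
        have h2 : -MY ≤ c0 - Gbar (1 - p) := by
          have := hMY p hp; rw [Real.norm_eq_abs, abs_le] at this; linarith [this.1]
        have h3 : 0 ≤ deriv u (c0 - Gbar (1 - p)) := hK0 _
        have h4 : deriv u (c0 - Gbar (1 - p)) ≤ deriv u (-MY) :=
          deriv_anti hu_conc hu_diff h2
        rw [abs_of_nonneg h3]
        exact mul_le_mul h1 h4 h3 ((abs_nonneg _).trans h1)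
    have hmono := integral_mono hI1 (hI2.add hI3) hpt
    have hadd := integral_add hI2 hI3
    simp only [Pi.add_apply] at hmono
    simp only [J]
    rw [← hc0]
    linarith
end

section
/- Suppose μ is absolutely continuous with density w (i.e., μ(dt) = w(t)dt on [0,1]). Suppose Ψ ∈ C²⁻([0,1]) satisfies Ψ(0) = 1 − θ, Ψ(1) = 1 and the OIDE min{ max{ −Ψ''(p), Ψ(p) − Φ_c[Ψ'](p) }, 2σh(p) − Ψ''(p) } = 0 for a.e. p ∈ [0,1]. Define Γ(p) = q(p) + (Ψ'(0) − Ψ'(p))/(2σ), Λ(p) = Ψ(p) − Φ_c[Ψ'](p), d = ol(Γ), ρ = Ψ'(0), and c = ( ∫_{[0,1]} u'( d − Γ(1−t) ) μ(dt) )⁻¹. Then Λ and Γ are absolutely continuous, c > 0, and (Λ, Γ, c, d, ρ) solves the ODE system: for a.e. p ∈ [0,1], min{ max{ Γ'(p) − h(p), Λ(p) }, Γ'(p) } = 0 and Λ'(p) = 2σ(q(p) − Γ(p)) + ρ − c·u'(d − Γ(p))·w(1−p), together with Λ(0) = 1 − θ, Λ(1) = 0, Γ(0) = 0, ol(Γ)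 = d, and ρ = θ + 2σ∫₀¹ Γ(t)dt − 2σ∫₀¹ q(t)dt; moreover Ψ(p) = 2σ∫₀ᵖ (q(t) − Γ(t))dt + ρp + 1 − θ. -/
open MeasureTheory Set

/-- The distribution function `Φ(p)` built from an optimal candidate `G`. -/
noncomputable def Phi (σ θ k : ℝ) (q u : ℝ → ℝ) (μ : Measure ℝ) (G : ℝ → ℝ) (p : ℝ) : ℝ :=
  (∫ t in Ioc (1 - p) 1, deriv u (ol σ θ k q G - G (1 - t)) ∂μ) /
  (∫ t in Icc (0:ℝ) 1, deriv u (ol σ θ k q G - G (1 - t)) ∂μ)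

/-- The function `Ψ` built from an optimal candidate `G`. -/
noncomputable def PsiOf (σ θ : ℝ) (q G : ℝ → ℝ) (p : ℝ) : ℝ :=
  (2 * σ * (∫ t in (0:ℝ)..1, G t) + θ - 2 * σ * (∫ t in (0:ℝ)..1, q t)) * (p - 1)
    + 2 * σ * (∫ t in p..(1:ℝ), (G t - q t)) + 1

/-- The nonlocal operator `Φ_c[f](p)`. -/
noncomputable def PhiC (σ θ k : ℝ) (q u : ℝ → ℝ) (μ : Measure ℝ) (f : ℝ → ℝ) : ℝ → ℝ :=
  Phi σ θ k q u μ (fun s => q s + (f 0 - f s) / (2 * σ))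

/-- `Ψ ∈ C²⁻([0,1])` with first derivative `Ψd` and a.e. second derivative `Ψdd`:
`Ψ` is differentiable on `[0,1]` with derivative `Ψd`, and `Ψd` is absolutely
continuous on `[0,1]` with a.e. derivative `Ψdd`. -/
def C2m (Ψ Ψd Ψdd : ℝ → ℝ) : Prop :=
  (∀ p ∈ Icc (0:ℝ) 1, HasDerivWithinAt Ψ (Ψd p) (Icc (0:ℝ) 1) p) ∧
  IntegrableOn Ψdd (Icc (0:ℝ) 1) ∧
  (∀ p ∈ Icc (0:ℝ) 1, Ψd p = Ψd 0 + ∫ t in (0:ℝ)..p, Ψdd t)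

/-- The ODE system (4.16) of the paper: `Λ, Γ` absolutely continuous on `[0,1]`
with a.e. derivatives `Λd, Γd`, satisfying the double-obstacle ODE, the ODE for `Λ`,
and the boundary/consistency conditions. -/
def ODESys (σ θ k : ℝ) (q h u w : ℝ → ℝ) (Λ Γ Λd Γd : ℝ → ℝ) (c d ρ : ℝ) : Prop :=
  IntegrableOn Λd (Icc (0:ℝ) 1) ∧ IntegrableOn Γd (Icc (0:ℝ) 1) ∧
  (∀ p ∈ Icc (0:ℝ) 1, Λ p = Λ 0 + ∫ t in (0:ℝ)..p, Λd t) ∧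
  (∀ p ∈ Icc (0:ℝ) 1, Γ p = Γ 0 + ∫ t in (0:ℝ)..p, Γd t) ∧
  (∀ᵐ p ∂(volume.restrict (Icc (0:ℝ) 1)),
    min (max (Γd p - h p) (Λ p)) (Γd p) = 0 ∧
    Λd p = 2 * σ * (q p - Γ p) + ρ - c * deriv u (d - Γ p) * w (1 - p)) ∧
  Λ 0 = 1 - θ ∧ Λ 1 = 0 ∧ Γ 0 = 0 ∧ ol σ θ k q Γ = d ∧
  ρ = θ + 2 * σ * (∫ t in (0:ℝ)..1, Γ t) - 2 * σ * (∫ t in (0:ℝ)..1, q t)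


lemma aux_deriv_pos {u : ℝ → ℝ} (hu_conc : ConcaveOn ℝ univ u) (hu_mono : StrictMono u)
    (hu_diff : Differentiable ℝ u) : ∀ x, 0 < deriv u x := by
  have hant : Antitone (deriv u) :=
    antitoneOn_univ.1 (hu_conc.antitoneOn_deriv fun x _ => hu_diff x)
  intro x
  by_contra hle
  push_neg at hle
  obtain ⟨z, hz, hzs⟩ := exists_hasDerivAt_eq_slope u (deriv u) (by linarith : x < x + 1)
    hu_diff.continuous.continuousOn (fun y _ => (hu_diff y).hasDerivAt)
  have h1 : u x < u (x + 1) := hu_mono (by linarith)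
  have h2 : 0 < deriv u z := by
    rw [hzs]
    apply div_pos (by linarith) (by linarith)
  have h3 : deriv u z ≤ deriv u x := hant hz.1.le
  linarith

lemma aux_minmax {s x y z : ℝ} (hs : 0 < s) (h : min (max x y) z = 0) :
    min (max (x / s) y) (z / s) = 0 := by
  have hz : 0 ≤ z := h ▸ min_le_right (max x y) z
  have hm : 0 ≤ max x y := h ▸ min_le_left (max x y) z
  have hzs : 0 ≤ z / s := div_nonneg hz hs.le
  rcases min_eq_iff.1 h with ⟨h1, _⟩ | ⟨h1, _⟩
  · -- max x y = 0
    have hx : x ≤ 0 := h1 ▸ le_max_left x y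
    have hy : y ≤ 0 := h1 ▸ le_max_right x y
    have hxy : x = 0 ∨ y = 0 := by
      rcases max_choice x y with hc | hc
      · exact Or.inl (hc ▸ h1)
      · exact Or.inr (hc ▸ h1)
    have hmax : max (x / s) y = 0 := by
      rcases hxy with rfl | rfl
      · simp [max_eq_left hy, zero_div]
      · have : x / s ≤ 0 := div_nonpos_of_nonpos_of_nonneg hx hs.le
        simp [max_eq_right this]
    rw [hmax, min_eq_left hzs]
  · -- z = 0
    subst h1
    have : 0 ≤ max (x / s) y := by
      rcases le_max_iff.1 hm with hx | hy
      · exact le_max_of_le_left (div_nonneg hx hs.le)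
      · exact le_max_of_le_right hy
    rw [zero_div, min_eq_right this]

theorem stmt_13 (σ θ k : ℝ) (hσ : 0 < σ) (hθ : 0 ≤ θ)
    (q h : ℝ → ℝ)
    (hh_int : IntegrableOn h (Icc (0:ℝ) 1))
    (hh_nonneg : ∀ᵐ t ∂(volume.restrict (Icc (0:ℝ) 1)), 0 ≤ h t)
    (hq : ∀ p ∈ Icc (0:ℝ) 1, q p = ∫ t in (0:ℝ)..p, h t)
    (m₀ : ℝ) (hm₀ : m₀ ∈ Ico (0:ℝ) 1)
    (hq0 : ∀ p ∈ Icc (0:ℝ) m₀, q p = 0)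
    (hhpos : ∀ᵐ t ∂(volume.restrict (Ioo m₀ 1)), 0 < h t)
    (u : ℝ → ℝ) (hu_conc : ConcaveOn ℝ univ u) (hu_mono : StrictMono u)
    (hu_diff : Differentiable ℝ u)
    (μ : Measure ℝ) [IsProbabilityMeasure μ] (hμ0 : μ {0} = 0)
    (hμsupp : μ (Icc (0:ℝ) 1)ᶜ = 0)
    (w : ℝ → ℝ) (hw_meas : Measurable w)
    (hw_nonneg : ∀ᵐ t ∂(volume.restrict (Icc (0:ℝ) 1)), 0 ≤ w t)
    (hμw : μ = (volume.restrict (Icc (0:ℝ) 1)).withDensity (fun t => ENNReal.ofReal (w t)))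
    (Ψ Ψd Ψdd : ℝ → ℝ) (hC2 : C2m Ψ Ψd Ψdd)
    (hΨ0 : Ψ 0 = 1 - θ) (hΨ1 : Ψ 1 = 1)
    (hOIDE : ∀ᵐ p ∂(volume.restrict (Icc (0:ℝ) 1)),
      min (max (-(Ψdd p)) (Ψ p - PhiC σ θ k q u μ Ψd p)) (2 * σ * h p - Ψdd p) = 0)
    (Γ Λ : ℝ → ℝ) (c d ρ : ℝ)
    (hΓ : Γ = fun p => q p + (Ψd 0 - Ψd p) / (2 * σ))
    (hΛ : Λ = fun p => Ψ p - PhiC σ θ k q u μ Ψd p)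
    (hd : d = ol σ θ k q Γ) (hρ : ρ = Ψd 0)
    (hc : c = (∫ t in Icc (0:ℝ) 1, deriv u (d - Γ (1 - t)) ∂μ)⁻¹) :
    0 < c ∧ (∃ Λd Γd : ℝ → ℝ, ODESys σ θ k q h u w Λ Γ Λd Γd c d ρ) ∧
      ∀ p ∈ Icc (0:ℝ) 1,
        Ψ p = 2 * σ * (∫ t in (0:ℝ)..p, (q t - Γ t)) + ρ * p + 1 - θ := by
  obtain ⟨hΨdiff, hΨdd_int, hΨd_eq⟩ := hC2
  have h2σ : (0:ℝ) < 2 * σ := by linarith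
  have h01 : (0:ℝ) ≤ 1 := by norm_num
  have huIcc : uIcc (0:ℝ) 1 = Icc (0:ℝ) 1 := uIcc_of_le h01
  have hupos : ∀ x, 0 < deriv u x := aux_deriv_pos hu_conc hu_mono hu_diff
  have hant : Antitone (deriv u) :=
    antitoneOn_univ.1 (hu_conc.antitoneOn_deriv fun x _ => hu_diff x)
  -- continuity of primitives
  have hprim : ∀ (f : ℝ → ℝ), IntegrableOn f (Icc (0:ℝ) 1) →
      ContinuousOn (fun p => ∫ t in (0:ℝ)..p, f t) (Icc (0:ℝ) 1) := by
    intro f hf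
    have := intervalIntegral.continuousOn_primitive_interval (a := (0:ℝ)) (b := 1)
      (μ := volume) (f := f) (by rwa [huIcc])
    rwa [huIcc] at this
  have hq_cont : ContinuousOn q (Icc (0:ℝ) 1) :=
    (hprim h hh_int).congr fun p hp => hq p hp
  have hΨd_cont : ContinuousOn Ψd (Icc (0:ℝ) 1) :=
    (continuousOn_const.add (hprim Ψdd hΨdd_int)).congr fun p hp => hΨd_eq p hp
  have hΓ_cont : ContinuousOn Γ (Icc (0:ℝ) 1) := by
    rw [hΓ]
    exact hq_cont.add ((continuousOn_const.sub hΨd_cont).div_const _)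
  -- extrema of Γ
  have hne : (Icc (0:ℝ) 1).Nonempty := ⟨0, by norm_num⟩
  obtain ⟨a, haI, hamax⟩ := isCompact_Icc.exists_isMaxOn hne hΓ_cont
  obtain ⟨b, hbI, hbmin⟩ := isCompact_Icc.exists_isMinOn hne hΓ_cont
  set M := deriv u (d - Γ a) with hMdef
  set m := deriv u (d - Γ b) with hmdef
  have hMb : ∀ s ∈ Icc (0:ℝ) 1, deriv u (d - Γ s) ≤ M :=
    fun s hs => hant (by have h1 : Γ s ≤ Γ a := hamax hs; linarith)
  have hmb : ∀ s ∈ Icc (0:ℝ) 1, m ≤ deriv u (d - Γ s) :=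
    fun s hs => hant (by have h1 : Γ b ≤ Γ s := hbmin hs; linarith)
  have hmpos : 0 < m := hupos _
  -- measurability
  have hduM : Measurable (deriv u) := hant.measurable
  have hΓae : AEMeasurable Γ (volume.restrict (Icc (0:ℝ) 1)) :=
    hΓ_cont.aemeasurable measurableSet_Icc
  have hgae : AEStronglyMeasurable (fun s => deriv u (d - Γ s))
      (volume.restrict (Icc (0:ℝ) 1)) :=
    (hduM.comp_aemeasurable (aemeasurable_const.sub hΓae)).aestronglyMeasurable
  -- integrability of w and its reflection
  have hwint : IntegrableOn w (Icc (0:ℝ) 1) := by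
    refine ⟨hw_meas.aestronglyMeasurable, ?_⟩
    have h1 : μ univ = 1 := measure_univ
    rw [hμw, withDensity_apply _ MeasurableSet.univ, Measure.restrict_univ] at h1
    rw [HasFiniteIntegral]
    have hcong : ∫⁻ t, ‖w t‖ₑ ∂(volume.restrict (Icc (0:ℝ) 1))
        = ∫⁻ t, ENNReal.ofReal (w t) ∂(volume.restrict (Icc (0:ℝ) 1)) := by
      refine lintegral_congr_ae ?_
      filter_upwards [hw_nonneg] with t ht
      rw [← Real.enorm_eq_ofReal ht]
    rw [hcong, h1]
    exact ENNReal.one_lt_top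
  have hwII : IntervalIntegrable w volume 0 1 :=
    (intervalIntegrable_iff_integrableOn_Ioc_of_le h01).2
      (hwint.mono_set Ioc_subset_Icc_self)
  have hwrefl : IntervalIntegrable (fun s => w (1 - s)) volume 0 1 := by
    have := hwII.comp_sub_left 1
    simpa using this.symm
  have hwrefl_int : IntegrableOn (fun s => w (1 - s)) (Icc (0:ℝ) 1) :=
    (integrableOn_Icc_iff_integrableOn_Ioc (by simp)).2
      ((intervalIntegrable_iff_integrableOn_Ioc_of_le h01).1 hwrefl)
  -- the function F
  set F : ℝ → ℝ := fun s => deriv u (d - Γ s) * w (1 - s) with hFdef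
  have hFint : IntegrableOn F (Icc (0:ℝ) 1) := by
    refine Integrable.mono' (hwrefl_int.norm.const_mul M) ?_ ?_
    · exact hgae.mul
        ((hw_meas.comp (measurable_const.sub measurable_id)).aestronglyMeasurable)
    · refine (ae_restrict_iff' measurableSet_Icc).2 (ae_of_all _ fun s hs => ?_)
      have h1 := hMb s hs
      have h2 := hupos (d - Γ s)
      have : ‖F s‖ = deriv u (d - Γ s) * ‖w (1 - s)‖ := by
        rw [hFdef]
        simp only [norm_mul, Real.norm_eq_abs, abs_of_pos h2]
      rw [this]
      exact mul_le_mul_of_nonneg_right h1 (norm_nonneg _)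
  have hFII : IntervalIntegrable F volume 0 1 :=
    (intervalIntegrable_iff_integrableOn_Ioc_of_le h01).2
      (hFint.mono_set Ioc_subset_Icc_self)
  -- the key integral identity
  have key : ∀ p ∈ Icc (0:ℝ) 1,
      (∫ t in Ioc (1 - p) 1, deriv u (d - Γ (1 - t)) ∂μ) = ∫ s in (0:ℝ)..p, F s := by
    intro p hp
    have hsub : Ioc (1 - p) 1 ⊆ Icc (0:ℝ) 1 := fun t ht =>
      ⟨le_of_lt (lt_of_le_of_lt (by linarith [hp.2]) ht.1), ht.2⟩
    rw [hμw]
    have hwd : (fun t => ENNReal.ofReal (w t)) = (fun t => ((Real.toNNReal (w t) : NNReal) : ENNReal)) := rfl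
    rw [hwd, setIntegral_withDensity_eq_setIntegral_smul hw_meas.real_toNNReal _ measurableSet_Ioc]
    rw [Measure.restrict_restrict measurableSet_Ioc, inter_eq_left.2 hsub]
    simp only [NNReal.smul_def, smul_eq_mul]
    have hcong : ∫ t in Ioc (1 - p) 1, (Real.toNNReal (w t) : ℝ) * deriv u (d - Γ (1 - t))
        = ∫ t in Ioc (1 - p) 1, F (1 - t) := by
      refine integral_congr_ae ?_
      have hmono : volume.restrict (Ioc (1 - p) 1) ≤ volume.restrict (Icc (0:ℝ) 1) :=
        Measure.restrict_mono hsub le_rfl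
      filter_upwards [(ae_mono hmono) hw_nonneg] with t ht
      rw [hFdef]
      simp only [Real.coe_toNNReal _ ht]
      have h11 : (1:ℝ) - (1 - t) = t := by ring
      rw [h11]
      ring
    rw [hcong, ← intervalIntegral.integral_of_le (by linarith [hp.1] : 1 - p ≤ 1)]
    rw [intervalIntegral.integral_comp_sub_left F 1]
    norm_num
  -- the denominator D
  set D := ∫ t in Icc (0:ℝ) 1, deriv u (d - Γ (1 - t)) ∂μ with hDdef
  have hD2 : D = ∫ s in (0:ℝ)..1, F s := by
    rw [hDdef, integral_Icc_eq_integral_Ioc' hμ0]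
    have := key 1 (by norm_num)
    norm_num at this
    exact this
  -- positivity of D
  have hgaeμ : AEStronglyMeasurable (fun t => deriv u (d - Γ (1 - t)))
      (μ.restrict (Icc (0:ℝ) 1)) := by
    have hcont2 : ContinuousOn (fun t => Γ (1 - t)) (Icc (0:ℝ) 1) := by
      refine ContinuousOn.comp hΓ_cont ((continuous_const.sub continuous_id).continuousOn) ?_
      intro t ht
      exact ⟨by linarith [ht.2], by linarith [ht.1]⟩
    have hbase : AEStronglyMeasurable (fun t => deriv u (d - Γ (1 - t)))
        (volume.restrict (Icc (0:ℝ) 1)) :=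
      (hduM.comp_aemeasurable
        (aemeasurable_const.sub (hcont2.aemeasurable measurableSet_Icc))).aestronglyMeasurable
    refine hbase.mono_ac ?_
    have hac : μ ≪ volume.restrict (Icc (0:ℝ) 1) := by
      rw [hμw]; exact withDensity_absolutelyContinuous _ _
    calc μ.restrict (Icc (0:ℝ) 1)
        ≪ (volume.restrict (Icc (0:ℝ) 1)).restrict (Icc (0:ℝ) 1) := hac.restrict _
      _ = volume.restrict (Icc (0:ℝ) 1) := by
          rw [Measure.restrict_restrict measurableSet_Icc, inter_self]
  have hgintμ : IntegrableOn (fun t => deriv u (d - Γ (1 - t))) (Icc (0:ℝ) 1) μ := by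
    refine Integrable.mono' (integrable_const M) hgaeμ ?_
    refine (ae_restrict_iff' measurableSet_Icc).2 (ae_of_all _ fun t ht => ?_)
    have h1t : (1:ℝ) - t ∈ Icc (0:ℝ) 1 := ⟨by linarith [ht.2], by linarith [ht.1]⟩
    rw [Real.norm_eq_abs, abs_of_pos (hupos _)]
    exact hMb _ h1t
  have hμIcc : μ (Icc (0:ℝ) 1) = 1 := by
    refine le_antisymm (by rw [← measure_univ (μ := μ)]; exact measure_mono (subset_univ _)) ?_
    have h2 : μ univ ≤ μ (Icc (0:ℝ) 1) + μ (Icc (0:ℝ) 1)ᶜ := by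
      rw [← Set.union_compl_self (Icc (0:ℝ) 1)]; exact measure_union_le _ _
    rwa [hμsupp, add_zero, measure_univ] at h2
  have hDpos : 0 < D := by
    have h1 : m * (μ (Icc (0:ℝ) 1)).toReal ≤ D := by
      rw [← measureReal_def]
      refine setIntegral_ge_of_const_le_real measurableSet_Icc (measure_ne_top μ _) ?_ hgintμ
      intro t ht
      exact hmb _ ⟨by linarith [ht.2], by linarith [ht.1]⟩
    rw [hμIcc] at h1
    simp only [ENNReal.toReal_one, mul_one] at h1
    linarith
  have hcpos : 0 < c := by rw [hc]; exact inv_pos.2 hDpos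
  -- PhiC in terms of F
  have hPhiC : ∀ p ∈ Icc (0:ℝ) 1,
      PhiC σ θ k q u μ Ψd p = c * ∫ s in (0:ℝ)..p, F s := by
    intro p hp
    have hPP : PhiC σ θ k q u μ Ψd = Phi σ θ k q u μ Γ := by rw [PhiC, hΓ]
    rw [hPP, Phi, ← hd, key p hp, ← hDdef, hc, div_eq_inv_mul]
  have hΛ' : ∀ p ∈ Icc (0:ℝ) 1, Λ p = Ψ p - c * ∫ s in (0:ℝ)..p, F s := by
    intro p hp
    rw [hΛ]
    simp only
    rw [hPhiC p hp]
  -- FTC for Ψ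
  have hΨcont : ContinuousOn Ψ (Icc (0:ℝ) 1) := fun p hp => (hΨdiff p hp).continuousWithinAt
  have hΨdII : IntervalIntegrable Ψd volume 0 1 := by
    apply ContinuousOn.intervalIntegrable
    rwa [huIcc]
  have hFTC : ∀ p ∈ Icc (0:ℝ) 1, ∫ t in (0:ℝ)..p, Ψd t = Ψ p - Ψ 0 := by
    intro p hp
    rcases eq_or_lt_of_le hp.1 with h0 | h0
    · rw [← h0]; simp
    · refine intervalIntegral.integral_eq_sub_of_hasDeriv_right_of_le h0.le
        (hΨcont.mono (Icc_subset_Icc le_rfl hp.2)) ?_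
        (hΨdII.mono_set (by rw [huIcc, uIcc_of_le h0.le]; exact Icc_subset_Icc le_rfl hp.2))
      intro x hx
      have hxI : x ∈ Icc (0:ℝ) 1 := ⟨hx.1.le, (hx.2.trans_le hp.2).le⟩
      refine (hΨdiff x hxI).mono_of_mem_nhdsWithin ?_
      exact Icc_mem_nhdsGT_of_mem ⟨hx.1.le, lt_of_lt_of_le hx.2 hp.2⟩
  have hFTC1 : ∫ t in (0:ℝ)..1, Ψd t = θ := by
    rw [hFTC 1 (by norm_num), hΨ0, hΨ1]; ring
  -- integral of Γ
  have hqII : IntervalIntegrable q volume 0 1 := by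
    apply ContinuousOn.intervalIntegrable; rwa [huIcc]
  have hΓint : ∫ t in (0:ℝ)..1, Γ t
      = (∫ t in (0:ℝ)..1, q t) + (ρ - θ) / (2 * σ) := by
    rw [hΓ]
    rw [intervalIntegral.integral_add hqII (by
      exact (IntervalIntegrable.sub (intervalIntegrable_const) hΨdII).div_const _)]
    congr 1
    rw [intervalIntegral.integral_div, intervalIntegral.integral_sub intervalIntegrable_const hΨdII]
    rw [hFTC1, intervalIntegral.integral_const]
    rw [hρ]
    norm_num
  have hρeq : ρ = θ + 2 * σ * (∫ t in (0:ℝ)..1, Γ t) - 2 * σ * (∫ t in (0:ℝ)..1, q t) := by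
    rw [hΓint]
    field_simp
    ring
  -- the candidate derivatives
  set Λd : ℝ → ℝ := fun p => Ψd p - c * F p with hΛd
  set Γd : ℝ → ℝ := fun p => h p - Ψdd p / (2 * σ) with hΓd
  have hΨd_intOn : IntegrableOn Ψd (Icc (0:ℝ) 1) := hΨd_cont.integrableOn_compact isCompact_Icc
  have hΛd_int : IntegrableOn Λd (Icc (0:ℝ) 1) := hΨd_intOn.sub (hFint.const_mul c)
  have hΓd_int : IntegrableOn Γd (Icc (0:ℝ) 1) := hh_int.sub (hΨdd_int.div_const _)
  have hΛ0 : Λ 0 = 1 - θ := by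
    rw [hΛ' 0 ⟨le_rfl, h01⟩]
    simp [hΨ0]
  have hΓ0 : Γ 0 = 0 := by
    rw [hΓ]
    simp only [sub_self, zero_div]
    rw [hq 0 ⟨le_rfl, h01⟩]
    simp
  have hΨddII : IntervalIntegrable Ψdd volume 0 1 :=
    (intervalIntegrable_iff_integrableOn_Ioc_of_le h01).2 (hΨdd_int.mono_set Ioc_subset_Icc_self)
  have hhII : IntervalIntegrable h volume 0 1 :=
    (intervalIntegrable_iff_integrableOn_Ioc_of_le h01).2 (hh_int.mono_set Ioc_subset_Icc_self)
  have hmono01 : ∀ p ∈ Icc (0:ℝ) 1, uIcc 0 p ⊆ uIcc (0:ℝ) 1 := by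
    intro p hp
    rw [huIcc, uIcc_of_le hp.1]
    exact Icc_subset_Icc le_rfl hp.2
  refine ⟨hcpos, ⟨Λd, Γd, hΛd_int, hΓd_int, ?_, ?_, ?_, hΛ0, ?_, hΓ0, hd.symm, hρeq⟩, ?_⟩
  · -- Λ p = Λ 0 + ∫ Λd
    intro p hp
    rw [hΛ' p hp, hΛ0, hΛd]
    rw [intervalIntegral.integral_sub (hΨdII.mono_set (hmono01 p hp))
      ((hFII.mono_set (hmono01 p hp)).const_mul c)]
    rw [hFTC p hp, intervalIntegral.integral_const_mul, hΨ0]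
    ring
  · -- Γ p = Γ 0 + ∫ Γd
    intro p hp
    rw [hΓ0, hΓd]
    rw [intervalIntegral.integral_sub (hhII.mono_set (hmono01 p hp))
      ((hΨddII.mono_set (hmono01 p hp)).div_const _)]
    have h1 : ∫ t in (0:ℝ)..p, Ψdd t = Ψd p - Ψd 0 := by
      rw [hΨd_eq p hp]; ring
    rw [intervalIntegral.integral_div, h1, ← hq p hp, hΓ]
    ring
  · -- the a.e. conditions
    filter_upwards [hOIDE, (ae_restrict_mem measurableSet_Icc)] with p hp hpI
    constructor
    · -- obstacle condition
      have hΛp : Ψ p - PhiC σ θ k q u μ Ψd p = Λ p := by rw [hΛ]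
      rw [hΛp] at hp
      have := aux_minmax h2σ hp
      have e1 : Γd p - h p = -Ψdd p / (2 * σ) := by rw [hΓd]; ring
      have e2 : Γd p = (2 * σ * h p - Ψdd p) / (2 * σ) := by
        rw [hΓd]; field_simp
      rw [e1, e2]
      exact this
    · -- ODE for Λ
      have hqΓ : q p - Γ p = -(Ψd 0 - Ψd p) / (2 * σ) := by simp only [hΓ]; ring
      simp only [hΛd, hFdef]
      rw [hqΓ, hρ]
      field_simp
      ring
  · -- Λ 1 = 0
    rw [hΛ' 1 ⟨h01, le_rfl⟩, hΨ1, hc, ← hD2]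
    field_simp
    norm_num
  · -- the Ψ formula
    intro p hp
    have h1 : ∀ t, q t - Γ t = (Ψd t - Ψd 0) / (2 * σ) := by
      intro t; rw [hΓ]; ring
    simp only [h1]
    rw [intervalIntegral.integral_div, intervalIntegral.integral_sub
      (hΨdII.mono_set (hmono01 p hp)) intervalIntegrable_const]
    rw [hFTC p hp, intervalIntegral.integral_const, hρ, hΨ0]
    field_simp
    ring
end
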